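/- arXiv:1810.09758 — 6 statements merged into one kernel-verified Lean document; each statement's English description precedes it below -/
import Mathlib

section
/- Let p be a complex polynomial with deg(p) ≥ 2 and P the corresponding matrix polynomial on 2×2 matrices. If a non-diagonalizable matrix M = Q · [[λ,1],[0,λ]] · Q^{-1} has bounded orbit under iteration of P, then λ lies in the filled Julia set K_p = {z : (p^r(z))_{r≥1} is bounded}. -/
open Matrix Polynomial Filter

attribute [local instance] Matrix.frobeniusNormedAddCommGroup Matrix.frobeniusNormedSpace

noncomputable section

/-- The filled Julia set of a complex polynomial. -/
def filledJulia (p : Polynomial ℂ) : Set ℂ :=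
  {z | Bornology.IsBounded (Set.range fun r : ℕ => (fun w => p.eval w)^[r + 1] z)}

/-- The set of 2×2 matrices with bounded orbit under the matrix polynomial. -/
def filledJuliaMat (p : Polynomial ℂ) : Set (Matrix (Fin 2) (Fin 2) ℂ) :=
  {M | Bornology.IsBounded
    (Set.range fun r : ℕ => (fun N : Matrix (Fin 2) (Fin 2) ℂ => Polynomial.aeval N p)^[r + 1] M)}

/-! If `M v = λ v` then `P(M) v = p(λ) v`, hence `P^[r] M v = p^[r] λ • v`: the orbit of an
eigenvalue is read off the orbit of the matrix along a fixed eigenvector. For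
`M = Q [[λ,1],[0,λ]] Q⁻¹` the first column of `Q` is such an eigenvector. -/

theorem Matrix.aeval_mulVec_of_mulVec_eq_smul {n R : Type*} [Fintype n] [DecidableEq n]
    [CommRing R] {A : Matrix n n R} {v : n → R} {a : R} (h : A *ᵥ v = a • v) (q : R[X]) :
    aeval A q *ᵥ v = q.eval a • v := by
  induction q using Polynomial.induction_on with
  | C c => simp [Algebra.algebraMap_eq_smul_one, smul_mulVec]
  | add f g hf hg => simp [add_mulVec, hf, hg, add_smul]
  | monomial k c ih =>
    rw [pow_succ, ← mul_assoc, map_mul, aeval_X, ← mulVec_mulVec, h, mulVec_smul, ih,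
      eval_mul_X, smul_smul, mul_comm]

theorem Matrix.iterate_aeval_mulVec_of_mulVec_eq_smul {n R : Type*} [Fintype n] [DecidableEq n]
    [CommRing R] {A : Matrix n n R} {v : n → R} {a : R} (h : A *ᵥ v = a • v) (q : R[X])
    (r : ℕ) : (fun N => aeval N q)^[r] A *ᵥ v = (fun w => q.eval w)^[r] a • v := by
  induction r with
  | zero => exact h
  | succ r ih =>
    simp only [Function.iterate_succ_apply']
    exact aeval_mulVec_of_mulVec_eq_smul ih q

theorem isBounded_range_of_isBounded_range_smul {ι 𝕜 E : Type*} [NormedField 𝕜]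
    [NormedAddCommGroup E] [NormedSpace 𝕜 E] {c : ι → 𝕜} {v : E} (hv : v ≠ 0)
    (hc : Bornology.IsBounded (Set.range fun i => c i • v)) :
    Bornology.IsBounded (Set.range c) := by
  obtain ⟨C, hC⟩ := isBounded_iff_forall_norm_le.1 hc
  refine isBounded_iff_forall_norm_le.2 ⟨C / ‖v‖, ?_⟩
  rintro _ ⟨i, rfl⟩
  rw [le_div_iff₀ (norm_pos_iff.2 hv), ← norm_smul]
  exact hC _ ⟨i, rfl⟩

theorem mem_filledJulia_of_mulVec_eq_smul {p : ℂ[X]} {M : Matrix (Fin 2) (Fin 2) ℂ}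
    (hM : M ∈ filledJuliaMat p) {v : Fin 2 → ℂ} (hv : v ≠ 0) {l : ℂ}
    (h : M *ᵥ v = l • v) :
    l ∈ filledJulia p := by
  let applyTo : Matrix (Fin 2) (Fin 2) ℂ →L[ℂ] Fin 2 → ℂ :=
    LinearMap.toContinuousLinearMap ((mulVecBilin ℂ ℂ).flip v)
  refine isBounded_range_of_isBounded_range_smul
    (c := fun r => (fun w => p.eval w)^[r + 1] l) hv ?_
  convert applyTo.lipschitz.isBounded_image hM using 1
  rw [← Set.range_comp]
  exact congrArg Set.range (funext fun r => (iterate_aeval_mulVec_of_mulVec_eq_smul h p _).symm)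

theorem Matrix.GeneralLinearGroup.conj_mulVec_of_mulVec_eq_smul {n R : Type*} [Fintype n]
    [DecidableEq n] [CommRing R] (Q : GL n R) {A : Matrix n n R} {v : n → R} {a : R}
    (h : A *ᵥ v = a • v) :
    ((Q : Matrix n n R) * A * ((Q⁻¹ : GL n R) : Matrix n n R)) *ᵥ ((Q : Matrix n n R) *ᵥ v)
      = a • ((Q : Matrix n n R) *ᵥ v) := by
  rw [← mulVec_mulVec, mulVec_mulVec _ ((Q⁻¹ : GL n R) : Matrix n n R), ← Units.val_mul,
    inv_mul_cancel, Units.val_one, one_mulVec, ← mulVec_mulVec, h, mulVec_smul]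

theorem stmt5_general (p : Polynomial ℂ) (l : ℂ) (Q : GL (Fin 2) ℂ)
    (hM : ((Q : Matrix (Fin 2) (Fin 2) ℂ) * !![l, 1; 0, l]
        * ((Q⁻¹ : GL (Fin 2) ℂ) : Matrix (Fin 2) (Fin 2) ℂ)) ∈ filledJuliaMat p) :
    l ∈ filledJulia p := by
  have hJ : !![l, 1; 0, l] *ᵥ Pi.single 0 1 = l • Pi.single 0 1 := by
    ext i; fin_cases i <;> simp [mulVec, dotProduct]
  have hv : (Q : Matrix (Fin 2) (Fin 2) ℂ) *ᵥ Pi.single 0 1 ≠ 0 := by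
    rw [Ne, ← mulVec_zero (Q : Matrix (Fin 2) (Fin 2) ℂ),
      (mulVec_injective_iff_isUnit.2 Q.isUnit).eq_iff]
    exact Pi.single_ne_zero_iff.2 one_ne_zero
  exact mem_filledJulia_of_mulVec_eq_smul hM hv
    (GeneralLinearGroup.conj_mulVec_of_mulVec_eq_smul Q hJ)

/-- If a non-diagonalizable matrix has bounded orbit, its eigenvalue lies in the
filled Julia set. -/
theorem stmt5 (p : Polynomial ℂ) (hdeg : 2 ≤ p.natDegree) (l : ℂ) (Q : GL (Fin 2) ℂ)
    (hM : ((Q : Matrix (Fin 2) (Fin 2) ℂ) * !![l, 1; 0, l]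
        * ((Q⁻¹ : GL (Fin 2) ℂ) : Matrix (Fin 2) (Fin 2) ℂ)) ∈ filledJuliaMat p) :
    l ∈ filledJulia p :=
  stmt5_general p l Q hM
end
end

section
/- Let p be a complex polynomial with deg(p) ≥ 2, P the corresponding matrix polynomial on 2×2 matrices, and K_P the set of matrices with bounded P-orbit. Then the closure of K_P equals the set of all 2×2 matrices whose eigenvalues all lie in the filled Julia set K_p. -/
open Matrix Polynomial Filter

attribute [local instance] Matrix.frobeniusNormedAddCommGroup Matrix.frobeniusNormedSpace

noncomputable section

/-!
If `M` has distinct eigenvalues `α ≠ β`, then `q(M) = q(α) E_α + q(β) E_β` for every polynomial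
`q` (Lagrange interpolation modulo the characteristic polynomial), so the orbit of `M` is bounded
as soon as `α, β ∈ K_p`. Conversely, by the spectral mapping theorem the eigenvalues of a matrix in
`K_P` lie in `K_p`; as `K_p` is closed and eigenvalues depend continuously on the matrix, this
passes to the closure of `K_P`. A matrix with a double eigenvalue `α ∈ K_p` is the limit of
rank-one perturbations with eigenvalues `α` and `μ ∈ K_p \ {α}`, `μ → α`, which needs that `K_p`
has no isolated points: near an isolated point some iterate of `p` maps a small circle far outside
`K_p`, so by the minimum modulus principle its values on the disc cover `K_p`, forcing `K_p` to be
a single point, whereas for `deg p ≥ 2` there are always two points with bounded orbit.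
-/

open Metric Set

theorem Polynomial.iterate_comp_aeval {R A : Type*} [CommSemiring R] [Semiring A] [Algebra R A]
    (p q : R[X]) (a : A) (n : ℕ) :
    aeval a (p.comp^[n] q) = (aeval · p)^[n] (aeval a q) := by
  induction n with
  | zero => rfl
  | succ n ih => rw [Function.iterate_succ_apply', Function.iterate_succ_apply', aeval_comp, ih]

theorem Polynomial.eq_C_leadingCoeff_mul_X_sub_C_pow {k : Type*} [Field k] [IsAlgClosed k]
    {q : k[X]} {a : k} (h : ∀ z, q.IsRoot z → z = a) :
    q = C q.leadingCoeff * (X - C a) ^ q.natDegree := by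
  rcases eq_or_ne q 0 with rfl | hq
  · simp
  have hroots : q.roots = Multiset.replicate q.natDegree a :=
    Multiset.eq_replicate.2 ⟨IsAlgClosed.card_roots_eq_natDegree,
      fun z hz => h z (isRoot_of_mem_roots hz)⟩
  conv_lhs => rw [(IsAlgClosed.splits q).eq_prod_roots, hroots]
  rw [Multiset.map_replicate, Multiset.prod_replicate]

theorem Polynomial.aeval_eq_interpolate_of_aeval_eq_zero {k A : Type*} [Field k] [Ring A]
    [Algebra k A] {a : A} {α β : k} (hαβ : α ≠ β) (ha : aeval a ((X - C α) * (X - C β)) = 0)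
    (q : k[X]) :
    aeval a q = q.eval α • (α - β)⁻¹ • (a - algebraMap k A β)
      + q.eval β • (β - α)⁻¹ • (a - algebraMap k A α) := by
  have hαβ' : α - β ≠ 0 := sub_ne_zero.2 hαβ
  have hβα' : β - α ≠ 0 := sub_ne_zero.2 hαβ.symm
  set L : k[X] := C (q.eval α * (α - β)⁻¹) * (X - C β) + C (q.eval β * (β - α)⁻¹) * (X - C α)
  have hα : (q - L).IsRoot α := by simp [L, hαβ']
  have hβ : (q - L).IsRoot β := by simp [L, hβα']
  obtain ⟨s, hs⟩ := (isCoprime_X_sub_C_of_isUnit_sub hαβ'.isUnit).mul_dvd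
    (dvd_iff_isRoot.2 hα) (dvd_iff_isRoot.2 hβ)
  have hq : q = (X - C α) * (X - C β) * s + L := by rw [← hs]; ring
  calc aeval a q = aeval a L := by rw [hq, map_add, map_mul, ha, zero_mul, zero_add]
    _ = _ := by simp only [L, map_add, map_mul, map_sub, aeval_C, aeval_X, Algebra.smul_def,
      mul_assoc]

theorem Complex.exists_mem_ball_eq_zero_of_norm_lt {h : ℂ → ℂ} {c : ℂ} {r a : ℝ} (hr : 0 < r)
    (hh : DifferentiableOn ℂ h (closedBall c r)) (hc : ‖h c‖ < a)
    (hsphere : ∀ z ∈ sphere c r, a ≤ ‖h z‖) : ∃ z ∈ ball c r, h z = 0 := by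
  by_contra! hball
  have hne : ∀ z ∈ closedBall c r, h z ≠ 0 := fun z hz hz0 => by
    rcases (mem_closedBall.1 hz).eq_or_lt with hzr | hzr
    · linarith [norm_nonneg (h c), hsphere z hzr, norm_eq_zero.2 hz0]
    · exact hball z hzr hz0
  have hc0 : 0 < ‖h c‖ := norm_pos_iff.2 (hne c (mem_closedBall_self hr.le))
  -- `1 / h` is holomorphic on the closed disc, so its norm at the centre is at most `1 / a`.
  have hmax := Complex.norm_le_of_forall_mem_frontier_norm_le (f := fun z => (h z)⁻¹) isBounded_ball
    (DifferentiableOn.diffContOnCl (by rw [closure_ball c hr.ne']; exact hh.inv hne))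
    (fun z hz => by
      rw [frontier_ball c hr.ne'] at hz
      rw [norm_inv]
      exact inv_anti₀ (hc0.trans hc) (hsphere z hz))
    (subset_closure (mem_ball_self hr))
  rw [norm_inv] at hmax
  exact (inv_lt_inv₀ (hc0.trans hc) hc0).2 hc |>.not_ge hmax

section FilledJulia

variable {p : ℂ[X]}

theorem mem_filledJulia_iff_exists_forall_norm_le {z : ℂ} :
    z ∈ filledJulia p ↔ ∃ C, ∀ n, ‖(p.eval ·)^[n + 1] z‖ ≤ C := by
  simp only [filledJulia, mem_ofPred_eq, isBounded_iff_forall_norm_le, forall_mem_range]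

theorem eval_mem_filledJulia_iff {z : ℂ} : p.eval z ∈ filledJulia p ↔ z ∈ filledJulia p := by
  have hsub : range (fun r : ℕ => (p.eval ·)^[r + 1] (p.eval z)) ⊆
      range fun r : ℕ => (p.eval ·)^[r + 1] z := by
    rintro _ ⟨r, rfl⟩
    exact ⟨r + 1, rfl⟩
  have hsup : range (fun r : ℕ => (p.eval ·)^[r + 1] z) ⊆
      insert (p.eval z) (range fun r : ℕ => (p.eval ·)^[r + 1] (p.eval z)) := by
    rintro _ ⟨_ | r, rfl⟩
    exacts [Or.inl rfl, Or.inr ⟨r, rfl⟩]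
  simp only [filledJulia, mem_ofPred_eq]
  exact ⟨fun h => (h.insert _).subset hsup, fun h => h.subset hsub⟩

theorem iterate_mem_filledJulia_iff {z : ℂ} (n : ℕ) :
    (p.eval ·)^[n] z ∈ filledJulia p ↔ z ∈ filledJulia p := by
  induction n generalizing z with
  | zero => rfl
  | succ n ih => rw [Function.iterate_succ_apply, ih, eval_mem_filledJulia_iff]

theorem mem_filledJulia_of_isFixedPt {z : ℂ} (h : Function.IsFixedPt (p.eval ·) z) :
    z ∈ filledJulia p :=
  Bornology.isBounded_singleton.subset (range_subset_iff.2 fun r => (h.iterate (r + 1)).eq)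

theorem nontrivial_filledJulia (hdeg : 2 ≤ p.natDegree) : (filledJulia p).Nontrivial := by
  set q := p - X
  have hq : q.natDegree = p.natDegree :=
    natDegree_sub_eq_left_of_natDegree_lt (by rw [natDegree_X]; omega)
  have hq0 : q ≠ 0 := fun h => by rw [h, natDegree_zero] at hq; omega
  have hfixed : ∀ z, q.IsRoot z → z ∈ filledJulia p := fun z hz =>
    mem_filledJulia_of_isFixedPt (sub_eq_zero.1 (by simpa [q] using hz))
  obtain ⟨μ, hμ⟩ := IsAlgClosed.exists_root q (by
    rw [degree_eq_natDegree hq0]; exact_mod_cast (by omega : q.natDegree ≠ 0))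
  by_cases hroots : ∃ ν, q.IsRoot ν ∧ ν ≠ μ
  · obtain ⟨ν, hν, hνμ⟩ := hroots
    exact ⟨ν, hfixed ν hν, μ, hfixed μ hμ, hνμ⟩
  push Not at hroots
  -- `p = X + c (X - μ) ^ d`, so `p (μ + t) = μ` as soon as `c t ^ (d - 1) = -1`.
  have hfac := eq_C_leadingCoeff_mul_X_sub_C_pow hroots
  set c := q.leadingCoeff
  have hc : c ≠ 0 := leadingCoeff_ne_zero.2 hq0
  obtain ⟨t, ht⟩ := IsAlgClosed.exists_pow_nat_eq (-c⁻¹) (n := q.natDegree - 1) (by omega)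
  have ht0 : t ≠ 0 := by
    rintro rfl
    rw [zero_pow (by omega), eq_comm, neg_eq_zero] at ht
    exact inv_ne_zero hc ht
  have hpt : p.eval (μ + t) = μ := by
    have h := congrArg (eval (μ + t)) hfac
    rw [← Nat.sub_add_cancel (show 1 ≤ q.natDegree by omega), pow_succ] at h
    simp only [q, eval_sub, eval_X, eval_mul, eval_C, eval_pow, add_sub_cancel_left, ht] at h
    field_simp at h
    linear_combination h
  refine ⟨μ + t, eval_mem_filledJulia_iff.1 (by rw [hpt]; exact hfixed μ hμ), μ, hfixed μ hμ, ?_⟩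
  simpa using ht0

end FilledJulia

def IsEscapeRadius (p : ℂ[X]) (R : ℝ) : Prop :=
  0 < R ∧ ∀ z : ℂ, R ≤ ‖z‖ → 2 * ‖z‖ ≤ ‖p.eval z‖

theorem exists_isEscapeRadius {p : ℂ[X]} (hdeg : 2 ≤ p.natDegree) : ∃ R, IsEscapeRadius p R := by
  have hdivX : 0 < p.divX.degree :=
    natDegree_pos_iff_degree_pos.1 (by rw [natDegree_divX_eq_natDegree_tsub_one]; omega)
  obtain ⟨R₀, -, hR₀⟩ := (atTop_basis.comap norm).eventually_iff.1 <|
    (p.divX.tendsto_norm_atTop hdivX tendsto_comap).eventually_ge_atTop 3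
  refine ⟨max R₀ (max 1 ‖p.coeff 0‖), lt_max_of_lt_right (lt_max_of_lt_left one_pos),
    fun z hz => ?_⟩
  have h3 : 3 ≤ ‖p.divX.eval z‖ := hR₀ (le_of_max_le_left hz)
  have hc : ‖p.coeff 0‖ ≤ ‖z‖ := (le_max_right _ _).trans (le_of_max_le_right hz)
  have hp := congrArg (eval z) (X_mul_divX_add p)
  simp only [eval_add, eval_mul, eval_X, eval_C] at hp
  have := norm_sub_le (z * p.divX.eval z + p.coeff 0) (p.coeff 0)
  rw [add_sub_cancel_right, norm_mul, hp] at this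
  nlinarith [norm_nonneg z]

namespace IsEscapeRadius

variable {p : ℂ[X]} {R : ℝ} (hR : IsEscapeRadius p R)
include hR

theorem two_pow_mul_le_norm_iterate {z : ℂ} (hz : R ≤ ‖z‖) (n : ℕ) :
    2 ^ n * ‖z‖ ≤ ‖(p.eval ·)^[n] z‖ := by
  induction n with
  | zero => simp
  | succ n ih =>
    have hRn : R ≤ ‖(p.eval ·)^[n] z‖ :=
      hz.trans ((le_mul_of_one_le_left (norm_nonneg _) (one_le_pow₀ one_le_two)).trans ih)
    rw [Function.iterate_succ_apply', pow_succ', mul_assoc]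
    exact (mul_le_mul_of_nonneg_left ih zero_le_two).trans (hR.2 _ hRn)

theorem lt_norm_iterate_of_le {z : ℂ} {m n : ℕ} (hm : R < ‖(p.eval ·)^[m] z‖) (hmn : m ≤ n) :
    R < ‖(p.eval ·)^[n] z‖ := by
  obtain ⟨k, rfl⟩ := Nat.exists_eq_add_of_le hmn
  rw [add_comm, Function.iterate_add_apply]
  exact hm.trans_le ((le_mul_of_one_le_left (norm_nonneg _) (one_le_pow₀ one_le_two)).trans
    (hR.two_pow_mul_le_norm_iterate hm.le k))

theorem mem_filledJulia_iff {z : ℂ} :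
    z ∈ filledJulia p ↔ ∀ n, ‖(p.eval ·)^[n] z‖ ≤ R := by
  refine ⟨fun hz n => ?_, fun h => mem_filledJulia_iff_exists_forall_norm_le.2 ⟨R, fun n => h _⟩⟩
  by_contra! hn
  obtain ⟨C, hC⟩ := mem_filledJulia_iff_exists_forall_norm_le.1 hz
  obtain ⟨k, hk⟩ := pow_unbounded_of_one_lt (C / R) one_lt_two
  rw [div_lt_iff₀ hR.1] at hk
  have hgrow := hR.two_pow_mul_le_norm_iterate hn.le (k + 1)
  rw [← Function.iterate_add_apply, Nat.add_right_comm, pow_succ] at hgrow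
  have h2k : (0 : ℝ) < 2 ^ k := by positivity
  nlinarith [hC (k + n), mul_lt_mul_of_pos_left hn h2k, norm_nonneg ((p.eval ·)^[n] z)]

theorem isClosed_filledJulia : IsClosed (filledJulia p) := by
  have h : filledJulia p = ⋂ n, {z | ‖(p.eval ·)^[n] z‖ ≤ R} := by
    ext z
    simp [hR.mem_filledJulia_iff]
  rw [h]
  exact isClosed_iInter fun n => isClosed_le (p.continuous.iterate n).norm continuous_const

theorem exists_forall_lt_norm_iterate {S : Set ℂ} (hS : IsCompact S)
    (hSK : Disjoint S (filledJulia p)) : ∃ N, ∀ z ∈ S, R < ‖(p.eval ·)^[N] z‖ := by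
  have hcover : S ⊆ ⋃ n, {z | R < ‖(p.eval ·)^[n] z‖} := fun z hz => by
    have hz' := hSK.notMem_of_mem_left hz
    rw [hR.mem_filledJulia_iff] at hz'
    push Not at hz'
    exact mem_iUnion.2 hz'
  exact hS.elim_directed_cover _
    (fun n => isOpen_lt continuous_const (p.continuous.iterate n).norm) hcover
    (Monotone.directed_le fun _ _ hmn _ hz => hR.lt_norm_iterate_of_le hz hmn)

theorem subsingleton_filledJulia_of_closedBall_inter_subset {μ : ℂ} {ε : ℝ}
    (hμ : μ ∈ filledJulia p) (hε : 0 < ε) (hiso : closedBall μ ε ∩ filledJulia p ⊆ {μ}) :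
    (filledJulia p).Subsingleton := by
  have hsphere : Disjoint (sphere μ ε) (filledJulia p) := disjoint_left.2 fun z hz hzK => by
    rw [eq_of_mem_singleton (hiso ⟨sphere_subset_closedBall hz, hzK⟩), mem_sphere, dist_self] at hz
    exact hε.ne hz
  obtain ⟨N, hN⟩ := hR.exists_forall_lt_norm_iterate (isCompact_sphere μ ε) hsphere
  have hle : ∀ w ∈ filledJulia p, ‖w‖ ≤ R := fun w hw => hR.mem_filledJulia_iff.1 hw 0
  refine (subsingleton_singleton (a := (p.eval ·)^[2 + N] μ)).anti fun w hw => ?_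
  -- `f^[2 + N]` maps the circle outside `closedBall 0 (4 * R)`, so by the minimum modulus
  -- principle it takes every value `w ∈ filledJulia p` on the disc, where only `μ` has a
  -- bounded orbit.
  obtain ⟨z, hz, hzw⟩ := Complex.exists_mem_ball_eq_zero_of_norm_lt
    (h := fun z => (p.eval ·)^[2 + N] z - w) (a := 3 * R) hε
    ((p.differentiable.iterate (2 + N)).sub_const w).differentiableOn
    (by
      have := norm_sub_le ((p.eval ·)^[2 + N] μ) w
      linarith [hle w hw, hR.1, hR.mem_filledJulia_iff.1 hμ (2 + N)])
    (fun z hz => by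
      have hgrow := hR.two_pow_mul_le_norm_iterate (hN z hz).le 2
      rw [← Function.iterate_add_apply] at hgrow
      have := norm_sub_norm_le ((p.eval ·)^[2 + N] z) w
      linarith [hle w hw, hN z hz])
  rw [sub_eq_zero] at hzw
  have hzK : z ∈ filledJulia p := (iterate_mem_filledJulia_iff (2 + N)).1 (hzw ▸ hw)
  rw [← hzw, eq_of_mem_singleton (hiso ⟨ball_subset_closedBall hz, hzK⟩)]
  rfl

end IsEscapeRadius

theorem perfect_filledJulia {p : ℂ[X]} (hdeg : 2 ≤ p.natDegree) : Perfect (filledJulia p) := by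
  obtain ⟨R, hR⟩ := exists_isEscapeRadius hdeg
  refine ⟨hR.isClosed_filledJulia, fun μ hμ => ?_⟩
  by_contra hacc
  rw [accPt_iff_nhds] at hacc
  push Not at hacc
  obtain ⟨U, hU, hUK⟩ := hacc
  obtain ⟨ε, hε, hεU⟩ := nhds_basis_closedBall.mem_iff.1 hU
  exact (nontrivial_filledJulia hdeg).not_subsingleton
    (hR.subsingleton_filledJulia_of_closedBall_inter_subset hμ hε
      fun z hz => hUK z ⟨hεU hz.1, hz.2⟩)

theorem mem_filledJuliaMat_iff_exists_forall_norm_le {p : ℂ[X]} {M : Matrix (Fin 2) (Fin 2) ℂ} :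
    M ∈ filledJuliaMat p ↔ ∃ C, ∀ n, ‖(aeval · p)^[n + 1] M‖ ≤ C := by
  simp only [filledJuliaMat, mem_ofPred_eq, isBounded_iff_forall_norm_le, forall_mem_range]

theorem spectrum.iterate_eval_mem_iterate_aeval {𝕜 A : Type*} [Field 𝕜] [Ring A] [Algebra 𝕜 A]
    {a : A} {μ : 𝕜} (hμ : μ ∈ spectrum 𝕜 a) (p : 𝕜[X]) (n : ℕ) :
    (p.eval ·)^[n] μ ∈ spectrum 𝕜 ((aeval · p)^[n] a) := by
  induction n with
  | zero => exact hμ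
  | succ n ih =>
    rw [Function.iterate_succ_apply', Function.iterate_succ_apply']
    exact spectrum.subset_polynomial_aeval _ p ⟨_, ih, rfl⟩

section

attribute [local instance] Matrix.frobeniusNormedRing Matrix.frobeniusNormedAlgebra

theorem spectrum_subset_filledJulia {p : ℂ[X]} {M : Matrix (Fin 2) (Fin 2) ℂ}
    (hM : M ∈ filledJuliaMat p) : spectrum ℂ M ⊆ filledJulia p := fun μ hμ => by
  obtain ⟨C, hC⟩ := mem_filledJuliaMat_iff_exists_forall_norm_le.1 hM
  refine mem_filledJulia_iff_exists_forall_norm_le.2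
    ⟨C * ‖(1 : Matrix (Fin 2) (Fin 2) ℂ)‖, fun n => ?_⟩
  exact (spectrum.norm_le_norm_mul_of_mem (spectrum.iterate_eval_mem_iterate_aeval hμ p _)).trans
    (mul_le_mul_of_nonneg_right (hC n) (norm_nonneg _))

end

theorem Matrix.mem_spectrum_iff_exists_mulVec_eq_smul {n k : Type*} [Fintype n] [DecidableEq n]
    [Field k] {M : Matrix n n k} {μ : k} :
    μ ∈ spectrum k M ↔ ∃ v ≠ 0, M *ᵥ v = μ • v := by
  rw [mem_spectrum_iff_isRoot_charpoly, IsRoot, eval_charpoly, ← exists_mulVec_eq_zero_iff]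
  simp only [sub_mulVec, scalar_apply, ← smul_one_eq_diagonal, smul_mulVec, one_mulVec,
    sub_eq_zero, eq_comm]

theorem isClosed_setOf_spectrum_subset {n : Type*} [Fintype n] [DecidableEq n] {K : Set ℂ}
    (hK : IsClosed K) (hK₀ : K.Nonempty) : IsClosed {M : Matrix n n ℂ | spectrum ℂ M ⊆ K} := by
  -- `χ_M(μ)` is the product of the `μ - ν` over the eigenvalues `ν ∈ K` of `M`.
  have hbound : ∀ μ, {M : Matrix n n ℂ | spectrum ℂ M ⊆ K} ⊆
      {M | infDist μ K ^ Fintype.card n ≤ ‖M.charpoly.eval μ‖} := fun μ M hM => by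
    have hroots : M.charpoly.roots.card = Fintype.card n := by
      rw [IsAlgClosed.card_roots_eq_natDegree, charpoly_natDegree_eq_dim]
    have hdist : ∀ ν ∈ M.charpoly.roots, infDist μ K ≤ ‖μ - ν‖ := fun ν hν => by
      rw [← dist_eq_norm]
      exact infDist_le_dist_of_mem
        (hM (mem_spectrum_iff_isRoot_charpoly.2 (isRoot_of_mem_roots hν)))
    calc infDist μ K ^ Fintype.card n = (M.charpoly.roots.map fun _ => infDist μ K).prod := by
          rw [Multiset.map_const', Multiset.prod_replicate, hroots]
      _ ≤ (M.charpoly.roots.map (‖μ - ·‖)).prod :=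
          Multiset.prod_map_le_prod_map₀ _ _ (fun _ _ => infDist_nonneg) hdist
      _ = ‖M.charpoly.eval μ‖ := by
          rw [(IsAlgClosed.splits _).eval_eq_prod_roots_of_monic M.charpoly_monic]
          simpa [Multiset.map_map] using
            (map_multiset_prod (normHom : ℂ →*₀ ℝ) (M.charpoly.roots.map (μ - ·))).symm
  refine isClosed_of_closure_subset fun M hM μ hμ => ?_
  have hclosed :
      IsClosed {M : Matrix n n ℂ | infDist μ K ^ Fintype.card n ≤ ‖M.charpoly.eval μ‖} := by
    refine isClosed_le continuous_const (Continuous.norm ?_)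
    simp_rw [eval_charpoly]
    exact (continuous_const.sub continuous_id).matrix_det
  have h := closure_minimal (hbound μ) hclosed hM
  rw [mem_ofPred_eq, (mem_spectrum_iff_isRoot_charpoly.1 hμ).eq_zero, norm_zero] at h
  exact (hK.mem_iff_infDist_zero hK₀).2
    (eq_zero_of_pow_eq_zero (h.antisymm (pow_nonneg infDist_nonneg _)))

theorem Matrix.charpoly_fin_two_eq_mul_of_mem_spectrum {k : Type*} [Field k]
    {M : Matrix (Fin 2) (Fin 2) k} {μ : k} (hμ : μ ∈ spectrum k M) :
    M.charpoly = (X - C μ) * (X - C (M.trace - μ)) := by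
  have h := mem_spectrum_iff_isRoot_charpoly.1 hμ
  rw [charpoly_fin_two] at h ⊢
  simp only [IsRoot, eval_add, eval_sub, eval_pow, eval_mul, eval_X, eval_C] at h
  rw [show M.det = M.trace * μ - μ ^ 2 by linear_combination h]
  simp only [map_sub, map_mul, map_pow]
  ring

theorem mem_filledJuliaMat_of_charpoly_eq {p : ℂ[X]} {M : Matrix (Fin 2) (Fin 2) ℂ} {α β : ℂ}
    (hαβ : α ≠ β) (hα : α ∈ filledJulia p) (hβ : β ∈ filledJulia p)
    (hM : M.charpoly = (X - C α) * (X - C β)) : M ∈ filledJuliaMat p := by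
  have hann : aeval M ((X - C α) * (X - C β)) = 0 := hM ▸ aeval_self_charpoly M
  set Eα := (α - β)⁻¹ • (M - algebraMap ℂ _ β)
  set Eβ := (β - α)⁻¹ • (M - algebraMap ℂ _ α)
  obtain ⟨Cα, hCα⟩ := mem_filledJulia_iff_exists_forall_norm_le.1 hα
  obtain ⟨Cβ, hCβ⟩ := mem_filledJulia_iff_exists_forall_norm_le.1 hβ
  refine mem_filledJuliaMat_iff_exists_forall_norm_le.2 ⟨Cα * ‖Eα‖ + Cβ * ‖Eβ‖, fun n => ?_⟩
  have horbit : (aeval · p)^[n + 1] M = aeval M (p.comp^[n] p) := (iterate_comp_aeval p p M n).symm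
  rw [horbit, aeval_eq_interpolate_of_aeval_eq_zero hαβ hann, iterate_comp_eval, iterate_comp_eval]
  exact norm_add_le_of_le ((norm_smul_le _ _).trans (by gcongr; exact hCα n))
    ((norm_smul_le _ _).trans (by gcongr; exact hCβ n))

theorem mem_closure_filledJuliaMat_of_trace_eq {p : ℂ[X]} {M : Matrix (Fin 2) (Fin 2) ℂ} {α : ℂ}
    (hα : α ∈ spectrum ℂ M) (htr : M.trace = 2 * α) (hαK : α ∈ filledJulia p)
    (hacc : AccPt α (𝓟 (filledJulia p))) : M ∈ closure (filledJuliaMat p) := by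
  obtain ⟨u, hu, hMu⟩ := mem_spectrum_iff_exists_mulVec_eq_smul.1 hα
  obtain ⟨i, hi⟩ := Function.ne_iff.1 hu
  set v : Fin 2 → ℂ := Pi.single i (u i)⁻¹
  have hvu : v ⬝ᵥ u = 1 := by simp [v, single_dotProduct, inv_mul_cancel₀ hi]
  -- `M' μ` has the eigenvector `u` for `μ` and trace `μ + α`, hence spectrum `{μ, α}`.
  set M' : ℂ → Matrix (Fin 2) (Fin 2) ℂ := fun μ => M + (μ - α) • vecMulVec u v
  have hmaps : MapsTo M' (filledJulia p \ {α}) (filledJuliaMat p) := fun μ ⟨hμK, hμα⟩ => by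
    have hμ : μ ∈ spectrum ℂ (M' μ) := mem_spectrum_iff_exists_mulVec_eq_smul.2 ⟨u, hu, by
      rw [add_mulVec, smul_mulVec, vecMulVec_mulVec, hvu, hMu, MulOpposite.op_one, one_smul]
      module⟩
    have htr' : (M' μ).trace - μ = α := by
      simp only [M', trace_add, trace_smul, trace_vecMulVec, dotProduct_comm u v, hvu, htr,
        smul_eq_mul]
      ring
    have hchar := charpoly_fin_two_eq_mul_of_mem_spectrum hμ
    rw [htr'] at hchar
    exact mem_filledJuliaMat_of_charpoly_eq hμα hμK hαK hchar
  have hcont : Continuous M' := by fun_prop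
  have hα' : α ∈ closure (filledJulia p \ {α}) :=
    mem_closure_iff_clusterPt.2 (accPt_principal_iff_clusterPt.1 hacc)
  simpa [M'] using map_mem_closure hcont hα' hmaps

/-- The closure of the set of matrices with bounded orbit is the set of matrices
all of whose eigenvalues lie in the filled Julia set. -/
theorem stmt8 (p : Polynomial ℂ) (hdeg : 2 ≤ p.natDegree) :
    closure (filledJuliaMat p)
      = {M : Matrix (Fin 2) (Fin 2) ℂ | ∀ μ ∈ spectrum ℂ M, μ ∈ filledJulia p} := by
  have hK := perfect_filledJulia hdeg
  refine subset_antisymm (closure_minimal (fun M hM => spectrum_subset_filledJulia hM)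
    (isClosed_setOf_spectrum_subset hK.closed (nontrivial_filledJulia hdeg).nonempty))
    fun M hM => ?_
  obtain ⟨α, hα⟩ := spectrum.nonempty_of_isAlgClosed_of_finiteDimensional ℂ M
  have hchar := charpoly_fin_two_eq_mul_of_mem_spectrum hα
  have hβ : M.trace - α ∈ spectrum ℂ M := mem_spectrum_iff_isRoot_charpoly.2 (by simp [hchar])
  have hαK := hM α hα
  by_cases hαβ : α = M.trace - α
  · exact mem_closure_filledJuliaMat_of_trace_eq hα (by linear_combination -hαβ) hαK
      (hK.acc α hαK)
  · exact subset_closure (mem_filledJuliaMat_of_charpoly_eq hαβ hαK (hM _ hβ) hchar)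
end
end

section
/- Let p be a complex polynomial with deg(p) ≥ 2, P the corresponding matrix polynomial, and K_P the set of 2×2 matrices with bounded P-orbit. If M is a diagonalizable matrix with both eigenvalues in the interior of K_p, then M has an open neighborhood contained in K_P; in particular M lies in the interior of K_P. -/
open Matrix Polynomial Filter

attribute [local instance] Matrix.frobeniusNormedAddCommGroup Matrix.frobeniusNormedSpace

noncomputable section

/-!
Far out, `‖p z‖ ≥ ‖z‖ + 1`, so all orbits starting in `K_p` stay in a fixed ball `‖z‖ < R`.
For a `2 × 2` matrix `M` with eigenvalues `μ₁, μ₂`, reduction modulo the characteristic polynomial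
gives `f(M) = a M + (f(μ₁) - a μ₁)`, where `a` is the divided difference of `f` at `μ₁, μ₂`
(`f'(μ₁)` if they coincide). For `f = p^[n]`, which is bounded by `R` on a disc around `μ₁`
inside `K_p`, the Cauchy estimate bounds `a` uniformly in `n`; so the orbit of `M` is bounded
as soon as both eigenvalues lie in the interior of `K_p`. Since the eigenvalues depend
continuously on `M`, this condition is open, and a conjugate of `diag(l₁, l₂)` satisfies it.
-/

open Metric Topology

theorem Polynomial.aeval_iterate_comp {R A : Type*} [CommSemiring R] [Semiring A] [Algebra R A]
    (p q : R[X]) (x : A) (n : ℕ) :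
    aeval x (p.comp^[n] q) = (fun y => aeval y p)^[n] (aeval x q) := by
  induction n with
  | zero => rfl
  | succ n ih => rw [Function.iterate_succ_apply', Function.iterate_succ_apply', aeval_comp, ih]

theorem Polynomial.exists_norm_add_one_le_norm_eval {𝕜 : Type*} [NormedField 𝕜] (p : 𝕜[X])
    (hp : 2 ≤ p.natDegree) : ∃ R, ∀ z : 𝕜, R ≤ ‖z‖ → ‖z‖ + 1 ≤ ‖p.eval z‖ := by
  have hdivX : 0 < p.divX.degree := by
    rw [← natDegree_pos_iff_degree_pos, natDegree_divX_eq_natDegree_tsub_one]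
    omega
  have hlarge : ∀ᶠ z in Bornology.cobounded 𝕜, 2 ≤ ‖p.divX.eval z‖ ∧ ‖p.coeff 0‖ + 1 ≤ ‖z‖ :=
    ((p.divX.tendsto_norm_atTop hdivX tendsto_norm_cobounded_atTop).eventually_ge_atTop 2).and
      (tendsto_norm_cobounded_atTop.eventually_ge_atTop _)
  obtain ⟨R, -, hR⟩ := hasBasis_cobounded_norm.eventually_iff.mp hlarge
  refine ⟨R, fun z hz => ?_⟩
  obtain ⟨h2, hc⟩ := hR hz
  have hsplit : p.eval z = p.divX.eval z * z + p.coeff 0 := by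
    conv_lhs => rw [← divX_mul_X_add p]
    simp
  calc ‖z‖ + 1 ≤ 2 * ‖z‖ - ‖p.coeff 0‖ := by linarith
    _ ≤ ‖p.divX.eval z‖ * ‖z‖ - ‖p.coeff 0‖ := by gcongr
    _ ≤ ‖p.eval z‖ := by
      rw [hsplit, ← norm_mul]
      exact norm_sub_le_norm_add _ _

theorem iterate_mem_filledJulia {p : ℂ[X]} {z : ℂ} (hz : z ∈ filledJulia p) (n : ℕ) :
    (fun w => p.eval w)^[n] z ∈ filledJulia p := by
  rw [filledJulia, Set.mem_ofPred_eq] at hz ⊢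
  refine hz.subset ?_
  rintro _ ⟨r, rfl⟩
  refine ⟨r + n, ?_⟩
  simp only [← Function.iterate_add_apply]
  congr 1
  omega

theorem exists_filledJulia_subset_ball (p : ℂ[X]) (hp : 2 ≤ p.natDegree) :
    ∃ R, filledJulia p ⊆ ball 0 R := by
  obtain ⟨R, hR⟩ := p.exists_norm_add_one_le_norm_eval hp
  refine ⟨R, fun z hz => ?_⟩
  by_contra hzR
  rw [mem_ball_zero_iff, not_lt] at hzR
  have hescape : ∀ n : ℕ, ‖z‖ + n ≤ ‖(fun w => p.eval w)^[n] z‖ := by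
    intro n
    induction n with
    | zero => simp
    | succ n ih =>
      rw [Function.iterate_succ_apply']
      have := hR _ (by linarith [norm_nonneg z, n.cast_nonneg (α := ℝ)])
      push_cast
      linarith
  rw [filledJulia, Set.mem_ofPred_eq] at hz
  obtain ⟨C, hC⟩ := isBounded_iff_forall_norm_le.mp hz
  obtain ⟨n, hn⟩ := exists_nat_gt C
  have := hC _ ⟨n, rfl⟩
  have := hescape (n + 1)
  push_cast at this
  linarith [norm_nonneg z]

theorem exists_forall_norm_iterate_eval_lt (p : ℂ[X]) (hp : 2 ≤ p.natDegree) :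
    ∃ R, ∀ z ∈ filledJulia p, ∀ n, ‖(fun w => p.eval w)^[n] z‖ < R := by
  obtain ⟨R, hR⟩ := exists_filledJulia_subset_ball p hp
  exact ⟨R, fun z hz n => mem_ball_zero_iff.mp (hR (iterate_mem_filledJulia hz n))⟩

section CauchyEstimate

variable {f : ℂ → ℂ} {c : ℂ} {s R : ℝ}

theorem norm_deriv_le_of_forall_mem_ball_norm_le (hs : 0 < s)
    (hf : DifferentiableOn ℂ f (ball c (2 * s))) (hR : ∀ z ∈ ball c (2 * s), ‖f z‖ ≤ R)
    {x : ℂ} (hx : x ∈ closedBall c s) : ‖deriv f x‖ ≤ 2 * R / s := by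
  have hsub : ball x s ⊆ ball c (2 * s) := by
    intro z hz
    rw [mem_ball] at hz ⊢
    linarith [dist_triangle z x c, mem_closedBall.mp hx]
  refine Complex.norm_deriv_le_div_of_mapsTo_ball (hf.mono hsub) (fun z hz => ?_) hs
  rw [mem_closedBall, dist_eq_norm]
  linarith [norm_sub_le (f z) (f x), hR z (hsub hz), hR x (hsub (mem_ball_self hs))]

/-- Near `c` the mean value theorem and the Cauchy estimate bound the divided difference `a`;
far from `c` the bound `‖a‖ * ‖c - w‖ ≤ 2 * R` suffices. -/
theorem norm_divided_difference_le (hs : 0 < s)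
    (hf : DifferentiableOn ℂ f (ball c (2 * s))) (hR : ∀ z ∈ ball c (2 * s), ‖f z‖ ≤ R)
    {w a : ℂ} (hw : ‖f w‖ ≤ R) (hdiff : a * (c - w) = f c - f w) (hderiv : c = w → a = deriv f c) :
    ‖a‖ ≤ 2 * R / s := by
  rcases eq_or_ne c w with rfl | hcw
  · rw [hderiv rfl]
    exact norm_deriv_le_of_forall_mem_ball_norm_le hs hf hR (mem_closedBall_self hs.le)
  have hcw' : 0 < ‖c - w‖ := norm_pos_iff.mpr (sub_ne_zero.mpr hcw)
  rw [le_div_iff₀ hs]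
  rcases le_or_gt ‖c - w‖ s with hnear | hfar
  · have hwc : w ∈ closedBall c s := by rwa [mem_closedBall, dist_eq_norm, norm_sub_rev]
    have hmvt : ‖f c - f w‖ ≤ 2 * R / s * ‖c - w‖ :=
      (convex_closedBall c s).norm_image_sub_le_of_norm_deriv_le
        (fun x hx => hf.differentiableAt (isOpen_ball.mem_nhds
          (closedBall_subset_ball (by linarith) hx)))
        (fun x hx => norm_deriv_le_of_forall_mem_ball_norm_le hs hf hR hx)
        hwc (mem_closedBall_self hs.le)
    rw [← hdiff, norm_mul] at hmvt
    have := le_of_mul_le_mul_right hmvt hcw'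
    rwa [le_div_iff₀ hs] at this
  · have hc := hR c (mem_ball_self (by linarith))
    calc ‖a‖ * s ≤ ‖a‖ * ‖c - w‖ := by gcongr
      _ = ‖f c - f w‖ := by rw [← norm_mul, hdiff]
      _ ≤ 2 * R := by linarith [norm_sub_le (f c) (f w)]

end CauchyEstimate

theorem norm_le_of_sq_sub_mul_add_eq_zero {𝕜 : Type*} [NormedField 𝕜] {μ t d : 𝕜}
    (h : μ ^ 2 - t * μ + d = 0) : ‖μ‖ ≤ ‖t‖ + ‖d‖ + 1 := by
  have hsq : ‖μ‖ ^ 2 ≤ ‖t‖ * ‖μ‖ + ‖d‖ := by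
    rw [← norm_pow, ← norm_mul, show μ ^ 2 = t * μ - d by linear_combination h]
    exact norm_sub_le _ _
  nlinarith [norm_nonneg t, norm_nonneg d, norm_nonneg μ]

namespace Matrix

variable {K : Type*} [Field K]

theorem exists_charpoly_eq_mul_fin_two [IsAlgClosed K] (M : Matrix (Fin 2) (Fin 2) K) :
    ∃ μ₁ μ₂ : K, M.charpoly = (X - C μ₁) * (X - C μ₂) := by
  have hsplit : M.charpoly.Splits := IsAlgClosed.splits _
  have hcard : M.charpoly.roots.card = 2 := by
    rw [splits_iff_card_roots.mp hsplit, charpoly_natDegree_eq_dim, Fintype.card_fin]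
  obtain ⟨μ₁, μ₂, hroots⟩ := Multiset.card_eq_two.mp hcard
  refine ⟨μ₁, μ₂, ?_⟩
  simpa [hroots] using hsplit.eq_prod_roots_of_monic M.charpoly_monic

theorem exists_aeval_eq_smul_add_smul_one {M : Matrix (Fin 2) (Fin 2) K} {μ₁ μ₂ : K}
    (hM : M.charpoly = (X - C μ₁) * (X - C μ₂)) (f : K[X]) :
    ∃ a : K, aeval M f = a • M + (f.eval μ₁ - a * μ₁) • (1 : Matrix (Fin 2) (Fin 2) K) ∧
      a * (μ₁ - μ₂) = f.eval μ₁ - f.eval μ₂ ∧ (μ₁ = μ₂ → a = (derivative f).eval μ₁) := by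
  set g := f %ₘ M.charpoly
  have hdeg : M.charpoly.natDegree = 2 := by rw [charpoly_natDegree_eq_dim, Fintype.card_fin]
  have hg : g.natDegree ≤ 1 := by
    have : g.natDegree < 2 :=
      hdeg ▸ natDegree_modByMonic_lt f M.charpoly_monic (by rintro h; simp [h] at hdeg)
    omega
  obtain ⟨a, b, hab⟩ : ∃ a b : K, g = C a * X + C b := ⟨_, _, eq_X_add_C_of_natDegree_le_one hg⟩
  have hf : f = C a * X + C b + M.charpoly * (f /ₘ M.charpoly) := by
    rw [← hab, modByMonic_add_div]
  have heval : ∀ μ, M.charpoly.eval μ = 0 → f.eval μ = a * μ + b := by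
    intro μ hμ
    rw [hf]
    simp [hμ]
  have h₁ := heval μ₁ (by simp [hM])
  refine ⟨a, ?_, ?_, ?_⟩
  · rw [aeval_eq_aeval_mod_charpoly, show f %ₘ M.charpoly = g from rfl, hab, h₁]
    simp [Algebra.algebraMap_eq_smul_one]
  · linear_combination heval μ₂ (by simp [hM]) - h₁
  · rintro rfl
    rw [hf, hM]
    simp [derivative_mul]

theorem sq_sub_trace_mul_add_det_eq_zero {M : Matrix (Fin 2) (Fin 2) ℂ} {μ : ℂ}
    (hμ : μ ∈ spectrum ℂ M) : μ ^ 2 - M.trace * μ + M.det = 0 := by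
  simpa [mem_spectrum_iff_isRoot_charpoly, charpoly_fin_two] using hμ

theorem eventually_spectrum_subset {V : Set ℂ} (hV : IsOpen V) {A : Matrix (Fin 2) (Fin 2) ℂ}
    (hA : spectrum ℂ A ⊆ V) : ∀ᶠ M in 𝓝 A, spectrum ℂ M ⊆ V := by
  obtain ⟨l₁, l₂, hA₁₂⟩ := exists_charpoly_eq_mul_fin_two A
  have hl : ∀ l, A.charpoly.IsRoot l → ∃ s > 0, ball l s ⊆ V := fun l hl =>
    isOpen_iff.mp hV l (hA (mem_spectrum_iff_isRoot_charpoly.mpr hl))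
  obtain ⟨s₁, hs₁, hV₁⟩ := hl l₁ (by simp [hA₁₂])
  obtain ⟨s₂, hs₂, hV₂⟩ := hl l₂ (by simp [hA₁₂])
  set s := min s₁ s₂
  have hs : 0 < s := lt_min hs₁ hs₂
  let ε : Matrix (Fin 2) (Fin 2) ℂ → ℝ := fun M =>
    ‖M.trace - A.trace‖ * (‖M.trace‖ + ‖M.det‖ + 1) + ‖M.det - A.det‖
  have hε : ∀ᶠ M in 𝓝 A, ε M < s ^ 2 := by
    have hcont : Continuous ε := by fun_prop
    exact hcont.continuousAt.eventually_lt continuousAt_const (by simpa [ε] using pow_pos hs 2)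
  filter_upwards [hε] with M hM μ hμ
  have hroot := sq_sub_trace_mul_add_det_eq_zero hμ
  have hprod : (μ - l₁) * (μ - l₂) = (M.trace - A.trace) * μ - (M.det - A.det) := by
    have := congrArg (eval μ) (charpoly_fin_two A)
    simp only [hA₁₂, eval_mul, eval_sub, eval_X, eval_C, eval_add, eval_pow] at this
    linear_combination this + hroot
  have hsmall : ‖μ - l₁‖ * ‖μ - l₂‖ < s ^ 2 := by
    calc ‖μ - l₁‖ * ‖μ - l₂‖ ≤ ‖M.trace - A.trace‖ * ‖μ‖ + ‖M.det - A.det‖ := by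
          rw [← norm_mul, hprod, ← norm_mul]
          exact norm_sub_le _ _
      _ ≤ ‖M.trace - A.trace‖ * (‖M.trace‖ + ‖M.det‖ + 1) + ‖M.det - A.det‖ := by
          gcongr
          exact norm_le_of_sq_sub_mul_add_eq_zero hroot
      _ < s ^ 2 := hM
  rcases lt_or_ge ‖μ - l₁‖ s with h | h
  · exact hV₁ (mem_ball_iff_norm.mpr (h.trans_le (min_le_left _ _)))
  · have : ‖μ - l₂‖ < s := by
      by_contra! h'
      nlinarith [mul_le_mul h h' hs.le (norm_nonneg _)]
    exact hV₂ (mem_ball_iff_norm.mpr (this.trans_le (min_le_right _ _)))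

theorem norm_aeval_le {M : Matrix (Fin 2) (Fin 2) ℂ} {μ₁ μ₂ : ℂ}
    (hM : M.charpoly = (X - C μ₁) * (X - C μ₂)) {f : ℂ[X]} {s R : ℝ} (hs : 0 < s)
    (hR : ∀ z ∈ ball μ₁ (2 * s), ‖f.eval z‖ ≤ R) (hμ₂ : ‖f.eval μ₂‖ ≤ R) :
    ‖aeval M f‖ ≤ 2 * R / s * ‖M‖ + (R + 2 * R / s * ‖μ₁‖) * ‖(1 : Matrix (Fin 2) (Fin 2) ℂ)‖ := by
  obtain ⟨a, haM, hdiff, hderiv⟩ := exists_aeval_eq_smul_add_smul_one hM f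
  have ha : ‖a‖ ≤ 2 * R / s :=
    norm_divided_difference_le hs f.differentiable.differentiableOn hR hμ₂ hdiff
      (by simpa using hderiv)
  have hb : ‖f.eval μ₁ - a * μ₁‖ ≤ R + 2 * R / s * ‖μ₁‖ := by
    calc ‖f.eval μ₁ - a * μ₁‖ ≤ ‖f.eval μ₁‖ + ‖a‖ * ‖μ₁‖ := by
          rw [← norm_mul]; exact norm_sub_le _ _
      _ ≤ R + 2 * R / s * ‖μ₁‖ := by
        gcongr
        exact hR μ₁ (mem_ball_self (by positivity))
  calc ‖aeval M f‖
      = ‖a • M + (f.eval μ₁ - a * μ₁) • (1 : Matrix (Fin 2) (Fin 2) ℂ)‖ := by rw [haM]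
    _ ≤ ‖a‖ * ‖M‖ + ‖f.eval μ₁ - a * μ₁‖ * ‖(1 : Matrix (Fin 2) (Fin 2) ℂ)‖ := by
      rw [← norm_smul, ← norm_smul]; exact norm_add_le _ _
    _ ≤ _ := by gcongr

end Matrix

theorem mem_filledJuliaMat_of_spectrum_subset {p : ℂ[X]} (hp : 2 ≤ p.natDegree)
    {M : Matrix (Fin 2) (Fin 2) ℂ} (hM : spectrum ℂ M ⊆ interior (filledJulia p)) :
    M ∈ filledJuliaMat p := by
  obtain ⟨R, hR⟩ := exists_forall_norm_iterate_eval_lt p hp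
  obtain ⟨μ₁, μ₂, hχ⟩ := M.exists_charpoly_eq_mul_fin_two
  have hμ : ∀ μ, M.charpoly.IsRoot μ → μ ∈ interior (filledJulia p) := fun μ h =>
    hM (mem_spectrum_iff_isRoot_charpoly.mpr h)
  obtain ⟨ε, hε, hball⟩ := isOpen_iff.mp isOpen_interior μ₁ (hμ μ₁ (by simp [hχ]))
  set s := ε / 2
  have hball' : ball μ₁ (2 * s) ⊆ filledJulia p := by
    rw [mul_div_cancel₀ ε two_ne_zero]
    exact hball.trans interior_subset
  have hμ₂ := interior_subset (hμ μ₂ (by simp [hχ]))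
  rw [filledJuliaMat, Set.mem_ofPred_eq, isBounded_iff_forall_norm_le]
  refine ⟨2 * R / s * ‖M‖ + (R + 2 * R / s * ‖μ₁‖) * ‖(1 : Matrix (Fin 2) (Fin 2) ℂ)‖, ?_⟩
  rintro _ ⟨n, rfl⟩
  dsimp only
  have hiter : (fun N => aeval N p)^[n + 1] M = aeval M (p.comp^[n + 1] X) := by
    simp [aeval_iterate_comp]
  have hf : ∀ z ∈ filledJulia p, ‖(p.comp^[n + 1] X).eval z‖ ≤ R := fun z hz => by
    simpa using (hR z hz (n + 1)).le
  rw [hiter]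
  exact norm_aeval_le hχ (half_pos hε) (fun z hz => hf z (hball' hz)) (hf μ₂ hμ₂)

theorem mem_interior_filledJuliaMat_of_spectrum_subset {p : ℂ[X]} (hp : 2 ≤ p.natDegree)
    {M : Matrix (Fin 2) (Fin 2) ℂ} (hM : spectrum ℂ M ⊆ interior (filledJulia p)) :
    M ∈ interior (filledJuliaMat p) := by
  have hopen : IsOpen {N : Matrix (Fin 2) (Fin 2) ℂ | spectrum ℂ N ⊆ interior (filledJulia p)} :=
    isOpen_iff_mem_nhds.mpr fun N hN => eventually_spectrum_subset isOpen_interior hN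
  exact interior_maximal (fun N hN => mem_filledJuliaMat_of_spectrum_subset hp hN) hopen hM

/-- A diagonalizable matrix with both eigenvalues in the interior of the filled Julia
set lies in the interior of the set of matrices with bounded orbit. -/
theorem stmt9 (p : Polynomial ℂ) (hdeg : 2 ≤ p.natDegree) (l₁ l₂ : ℂ)
    (h₁ : l₁ ∈ interior (filledJulia p)) (h₂ : l₂ ∈ interior (filledJulia p))
    (Q : GL (Fin 2) ℂ) :
    (∃ U : Set (Matrix (Fin 2) (Fin 2) ℂ), IsOpen U ∧
        ((Q : Matrix (Fin 2) (Fin 2) ℂ) * !![l₁, 0; 0, l₂]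
          * ((Q⁻¹ : GL (Fin 2) ℂ) : Matrix (Fin 2) (Fin 2) ℂ)) ∈ U ∧ U ⊆ filledJuliaMat p) ∧
      ((Q : Matrix (Fin 2) (Fin 2) ℂ) * !![l₁, 0; 0, l₂]
          * ((Q⁻¹ : GL (Fin 2) ℂ) : Matrix (Fin 2) (Fin 2) ℂ)) ∈ interior (filledJuliaMat p) := by
  have hspec : spectrum ℂ ((Q : Matrix (Fin 2) (Fin 2) ℂ) * !![l₁, 0; 0, l₂]
      * ((Q⁻¹ : GL (Fin 2) ℂ) : Matrix (Fin 2) (Fin 2) ℂ)) ⊆ interior (filledJulia p) := by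
    rw [spectrum.units_conjugate, ← diagonal_vec2, spectrum_diagonal]
    rintro _ ⟨i, rfl⟩
    fin_cases i
    exacts [h₁, h₂]
  have hint := mem_interior_filledJuliaMat_of_spectrum_subset hdeg hspec
  exact ⟨⟨_, isOpen_interior, hint, interior_subset⟩, hint⟩
end
end

section
/- Let p be a complex polynomial of degree ≥ 2 and P the corresponding matrix polynomial on 2×2 matrices. A non-diagonalizable matrix M = Q · [[λ,1],[0,λ]] · Q^{-1} satisfies P^n(M) = M for some n ≥ 1 if and only if p^n(λ) = λ and (p^n)'(λ) = 1. -/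
/-!
The n-th iterate of `N ↦ p(N)` is evaluation of the single polynomial `q = p ∘ ⋯ ∘ p`, and
evaluation commutes with conjugation by `Q`. Writing `J(λ) = λ·1 + E` with `E² = 0`, we get
`q(λ·1 + E) = q(λ)·1 + q'(λ)·E`, so `Pⁿ` fixes `Q J(λ) Q⁻¹` exactly when `q(λ) = λ` and `q'(λ) = 1`.
-/

open Matrix Polynomial

theorem aeval_units_conj {R A : Type*} [CommSemiring R] [Ring A] [Algebra R A]
    (u : Aˣ) (x : A) (p : R[X]) :
    aeval (u * x * ↑u⁻¹ : A) p = u * aeval x p * ↑u⁻¹ := by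
  simpa [ConjAct.units_smul_def] using
    aeval_algHom_apply (MulSemiringAction.toAlgEquiv R A (ConjAct.toConjAct u)) x p

theorem iterate_aeval_eq_aeval_iterate_comp {R A : Type*} [CommSemiring R] [Semiring A]
    [Algebra R A] (p : R[X]) (n : ℕ) (x : A) :
    (fun y : A => aeval y p)^[n] x = aeval x (p.comp^[n] X) := by
  induction n with
  | zero => simp
  | succ n ih => rw [Function.iterate_succ_apply', ih, Function.iterate_succ_apply', aeval_comp]

theorem iterate_eval_eq_eval_iterate_comp {R : Type*} [CommSemiring R] (p : R[X]) (n : ℕ) :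
    (fun z => p.eval z)^[n] = fun z => (p.comp^[n] X).eval z := by
  funext z
  rw [iterate_comp_eval, eval_X]

theorem aeval_upperTriangular_const_diag {R : Type*} [CommRing R] (p : R[X]) (a b : R) :
    aeval !![a, b; 0, a] p = !![p.eval a, p.derivative.eval a * b; 0, p.eval a] := by
  induction p using Polynomial.induction_on with
  | C c => simp [Algebra.algebraMap_eq_smul_one, Matrix.one_fin_two]
  | add p q hp hq =>
    rw [map_add, hp, hq]
    ext i j; fin_cases i <;> fin_cases j <;> simp [add_mul]
  | monomial k c ih =>
    rw [pow_succ, ← mul_assoc]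
    generalize C c * X ^ k = q at ih ⊢
    rw [map_mul, ih, aeval_X, Matrix.mul_fin_two, derivative_mul, derivative_X]
    simp only [eval_mul, eval_add, eval_X, mul_one, mul_zero, zero_mul, add_zero, zero_add]
    congr! 4
    ring

theorem upperTriangular_const_diag_inj {R : Type*} [Zero R] (a b c d : R) :
    !![a, b; 0, a] = !![c, d; 0, c] ↔ a = c ∧ b = d := by
  simp only [EmbeddingLike.apply_eq_iff_eq, vecCons_inj, and_true, true_and]
  exact and_iff_left_of_imp And.left

theorem stmt15_general (p : Polynomial ℂ) (l : ℂ) (Q : GL (Fin 2) ℂ)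
    (n : ℕ) :
    (fun N : Matrix (Fin 2) (Fin 2) ℂ => Polynomial.aeval N p)^[n]
        ((Q : Matrix (Fin 2) (Fin 2) ℂ) * !![l, 1; 0, l]
          * ((Q⁻¹ : GL (Fin 2) ℂ) : Matrix (Fin 2) (Fin 2) ℂ))
      = (Q : Matrix (Fin 2) (Fin 2) ℂ) * !![l, 1; 0, l]
          * ((Q⁻¹ : GL (Fin 2) ℂ) : Matrix (Fin 2) (Fin 2) ℂ)
    ↔ ((fun z => p.eval z)^[n] l = l ∧ deriv ((fun z => p.eval z)^[n]) l = 1) := by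
  rw [iterate_aeval_eq_aeval_iterate_comp, aeval_units_conj, aeval_upperTriangular_const_diag,
    Units.mul_left_inj, Units.mul_right_inj, upperTriangular_const_diag_inj,
    iterate_eval_eq_eval_iterate_comp, Polynomial.deriv, mul_one]

/-- A non-diagonalizable matrix Q·J(λ)·Q⁻¹ is fixed by the n-th iterate of the matrix
polynomial iff λ is fixed by pⁿ and (pⁿ)′(λ) = 1. -/
theorem stmt15 (p : Polynomial ℂ) (hdeg : 2 ≤ p.natDegree) (l : ℂ) (Q : GL (Fin 2) ℂ)
    (n : ℕ) (hn : 1 ≤ n) :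
    (fun N : Matrix (Fin 2) (Fin 2) ℂ => Polynomial.aeval N p)^[n]
        ((Q : Matrix (Fin 2) (Fin 2) ℂ) * !![l, 1; 0, l]
          * ((Q⁻¹ : GL (Fin 2) ℂ) : Matrix (Fin 2) (Fin 2) ℂ))
      = (Q : Matrix (Fin 2) (Fin 2) ℂ) * !![l, 1; 0, l]
          * ((Q⁻¹ : GL (Fin 2) ℂ) : Matrix (Fin 2) (Fin 2) ℂ)
    ↔ ((fun z => p.eval z)^[n] l = l ∧ deriv ((fun z => p.eval z)^[n]) l = 1) :=
  stmt15_general p l Q n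
end

section
/- Let p be a complex polynomial of degree d ≥ 2, with Böttcher function φ_p defined and holomorphic on Ω_R = {z : |z| > R} for R sufficiently large, satisfying φ_p(p(z)) = (φ_p(z))^d on Ω_R. Define Φ on 2×2 matrices with both eigenvalues in Ω_R by: Φ(Q diag(λ,μ) Q^{-1}) = Q diag(φ_p(λ), φ_p(μ)) Q^{-1} for diagonalizable matrices, and Φ(Q [[λ,1],[0,λ]] Q^{-1}) = Q [[φ_p(λ), φ_p'(λ)],[0, φ_p(λ)]] Q^{-1} for non-diagonalizable matrices. Then Φ(P(M)) = (Φ(M))^d for every matrix M whose eigenvalues λ satisfy both |λ| > R and |p(λ)| > R. -/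
/-!
Every complex `2 × 2` matrix is conjugate to `diag(a, c)` or to the Jordan block `J(a)`, and
both `P` and `Φ` commute with conjugation. On `diag(a, c)` the claim is `φ ∘ p = φ ^ d` at both
eigenvalues. On `J(a)` the diagonal entries of both sides are `φ (p a) = φ a ^ d`, while the
off-diagonal entries are `p' a * φ' (p a)` and `d * φ a ^ (d - 1) * φ' a`, which agree by the
chain rule applied to `φ ∘ p = φ ^ d` near `a`. For the left-hand side,
`P(J(a)) = !![p a, p' a; 0, p a]` is scalar when `p' a = 0` and conjugate to `J(p a)` by
`diag(p' a, 1)` otherwise; both cases give the same formula for `Φ`.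
-/

open Matrix Polynomial Filter
open scoped Topology

namespace Units

theorem conj_conj {M : Type*} [Monoid M] (u v : Mˣ) (a : M) :
    ↑u * (↑v * a * ↑v⁻¹) * ↑u⁻¹ = ↑(u * v) * a * ↑(u * v)⁻¹ := by
  simp only [_root_.mul_inv_rev, val_mul, mul_assoc]

theorem aeval_conj {R A : Type*} [CommSemiring R] [Semiring A] [Algebra R A]
    (u : Aˣ) (a : A) (q : R[X]) :
    aeval (↑u * a * ↑u⁻¹) q = ↑u * aeval a q * ↑u⁻¹ := by
  simpa [ConjAct.units_smul_def] using
    aeval_algHom_apply (MulSemiringAction.toAlgHom R A (ConjAct.toConjAct u)) a q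

theorem spectrum_conj {R A : Type*} [CommSemiring R] [Ring A] [Algebra R A] (u : Aˣ) (a : A) :
    spectrum R (↑u * a * ↑u⁻¹) = spectrum R a :=
  AlgEquiv.spectrum_eq (MulSemiringAction.toAlgEquiv R A (ConjAct.toConjAct u)) a

end Units

theorem HasDerivAt.mul_eq_of_comp_eventuallyEq_pow {𝕜 : Type*} [NontriviallyNormedField 𝕜]
    {f g : 𝕜 → 𝕜} {f' g' f₀' z : 𝕜} {d : ℕ} (hf : HasDerivAt f f' (g z))
    (hg : HasDerivAt g g' z) (hf₀ : HasDerivAt f f₀' z)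
    (h : f ∘ g =ᶠ[𝓝 z] fun w => f w ^ d) :
    f' * g' = d * f z ^ (d - 1) * f₀' :=
  ((hf.comp z hg).congr_of_eventuallyEq h.symm).unique (hf₀.fun_pow d)

namespace Matrix

section CommRing

variable {R : Type*} [CommRing R]

theorem aeval_fin_two_diag (a c : R) (q : R[X]) :
    aeval !![a, 0; 0, c] q = !![q.eval a, 0; 0, q.eval c] := by
  induction q using Polynomial.induction_on with
  | C r => ext i j; fin_cases i <;> fin_cases j <;> simp [Algebra.algebraMap_eq_smul_one]
  | add q r hq hr => simp only [map_add, hq, hr]; ext i j; fin_cases i <;> fin_cases j <;> simp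
  | monomial n r ih =>
    rw [pow_succ, ← mul_assoc, map_mul, ih, aeval_X]
    ext i j; fin_cases i <;> fin_cases j <;> simp [mul_apply, Fin.sum_univ_two]

theorem aeval_fin_two_upper_scalar (a b : R) (q : R[X]) :
    aeval !![a, b; 0, a] q = !![q.eval a, b * q.derivative.eval a; 0, q.eval a] := by
  induction q using Polynomial.induction_on with
  | C r => ext i j; fin_cases i <;> fin_cases j <;> simp [Algebra.algebraMap_eq_smul_one]
  | add q r hq hr =>
    simp only [map_add, hq, hr]; ext i j; fin_cases i <;> fin_cases j <;> simp [mul_add]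
  | monomial n r ih =>
    rw [pow_succ, ← mul_assoc, map_mul, ih, aeval_X]
    ext i j
    fin_cases i <;> fin_cases j <;> simp [mul_apply, Fin.sum_univ_two]
    ring

theorem fin_two_diag_pow (a c : R) (n : ℕ) :
    !![a, 0; 0, c] ^ n = !![a ^ n, 0; 0, c ^ n] := by
  simpa using aeval_fin_two_diag a c (X ^ n)

theorem fin_two_upper_scalar_pow (a b : R) (n : ℕ) :
    !![a, b; 0, a] ^ n = !![a ^ n, n * a ^ (n - 1) * b; 0, a ^ n] := by
  simpa [derivative_X_pow, mul_comm, mul_assoc] using aeval_fin_two_upper_scalar a b (X ^ n)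

variable [Nontrivial R]

theorem mem_spectrum_fin_two_upper_left (a b c : R) : a ∈ spectrum R !![a, b; 0, c] := by
  rw [spectrum.mem_iff, isUnit_iff_isUnit_det, Algebra.algebraMap_eq_smul_one]
  simp [det_fin_two]

theorem mem_spectrum_fin_two_upper_right (a b c : R) : c ∈ spectrum R !![a, b; 0, c] := by
  rw [spectrum.mem_iff, isUnit_iff_isUnit_det, Algebra.algebraMap_eq_smul_one]
  simp [det_fin_two]

end CommRing

section Field

variable {K : Type*} [Field K]

theorem exists_conj_fin_two_upper [IsAlgClosed K] (M : Matrix (Fin 2) (Fin 2) K) :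
    ∃ (Q : GL (Fin 2) K) (a b c : K),
      M = (Q * !![a, b; 0, c] * Q⁻¹ : Matrix (Fin 2) (Fin 2) K) := by
  by_cases h10 : M 1 0 = 0
  · exact ⟨1, M 0 0, M 0 1, M 1 1, by simpa [← h10] using eta_fin_two M⟩
  obtain ⟨l, hl⟩ := IsAlgClosed.exists_root M.charpoly (by simp [charpoly_degree_eq_dim])
  have hchar : (l - M 0 0) * (l - M 1 1) - M 0 1 * M 1 0 = 0 := by
    simpa [eval_charpoly, det_fin_two] using hl
  -- the first column `(l - M 1 1, M 1 0)` of `Q` is an eigenvector for the eigenvalue `l`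
  have hdet : det !![l - M 1 1, 1; M 1 0, 0] ≠ 0 := by simpa [det_fin_two] using h10
  refine ⟨GeneralLinearGroup.mkOfDetNeZero _ hdet, l, 1, M 0 0 + M 1 1 - l,
    (Units.eq_mul_inv_iff_mul_eq _).mpr ?_⟩
  ext i j
  fin_cases i <;> fin_cases j <;> simp [mul_apply, Fin.sum_univ_two]
  · linear_combination -hchar
  · ring

theorem exists_conj_fin_two_diag_of_ne (a b c : K) (hac : a ≠ c) :
    ∃ S : GL (Fin 2) K,
      !![a, b; 0, c] = (S * !![a, 0; 0, c] * S⁻¹ : Matrix (Fin 2) (Fin 2) K) := by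
  have hdet : det !![1, b; 0, c - a] ≠ 0 := by simpa [det_fin_two, sub_eq_zero] using hac.symm
  refine ⟨GeneralLinearGroup.mkOfDetNeZero _ hdet, (Units.eq_mul_inv_iff_mul_eq _).mpr ?_⟩
  ext i j
  fin_cases i <;> fin_cases j <;> simp [mul_apply, Fin.sum_univ_two] <;> ring

theorem exists_conj_scale_fin_two_upper_scalar (b : K) (hb : b ≠ 0) :
    ∃ S : GL (Fin 2) K, ∀ x y : K,
      (S * !![x, y; 0, x] * S⁻¹ : Matrix (Fin 2) (Fin 2) K) = !![x, b * y; 0, x] := by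
  have hdet : det !![b, 0; 0, (1 : K)] ≠ 0 := by simpa [det_fin_two] using hb
  refine ⟨GeneralLinearGroup.mkOfDetNeZero _ hdet,
    fun x y => ((Units.eq_mul_inv_iff_mul_eq _).mpr ?_).symm⟩
  ext i j
  fin_cases i <;> fin_cases j <;> simp [mul_apply, Fin.sum_univ_two]
  ring

theorem exists_conj_fin_two_diag_or_jordan [IsAlgClosed K] (M : Matrix (Fin 2) (Fin 2) K) :
    ∃ Q : GL (Fin 2) K,
      (∃ a c : K, M = (Q * !![a, 0; 0, c] * Q⁻¹ : Matrix (Fin 2) (Fin 2) K)) ∨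
      ∃ a : K, M = (Q * !![a, 1; 0, a] * Q⁻¹ : Matrix (Fin 2) (Fin 2) K) := by
  obtain ⟨Q, a, b, c, rfl⟩ := exists_conj_fin_two_upper M
  rcases ne_or_eq a c with hac | rfl
  · obtain ⟨S, hS⟩ := exists_conj_fin_two_diag_of_ne a b c hac
    exact ⟨Q * S, .inl ⟨a, c, by rw [hS, Units.conj_conj]⟩⟩
  rcases eq_or_ne b 0 with rfl | hb
  · exact ⟨Q, .inl ⟨a, a, rfl⟩⟩
  obtain ⟨S, hS⟩ := exists_conj_scale_fin_two_upper_scalar b hb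
  exact ⟨Q * S, .inr ⟨a, by rw [← Units.conj_conj, hS, mul_one]⟩⟩

theorem apply_conj_fin_two_upper_scalar {s : Set K} {φ φ' : K → K}
    {Φ : Matrix (Fin 2) (Fin 2) K → Matrix (Fin 2) (Fin 2) K}
    (hΦdiag : ∀ (l : K) (Q : GL (Fin 2) K), l ∈ s →
      Φ (Q * !![l, 0; 0, l] * Q⁻¹ : Matrix (Fin 2) (Fin 2) K)
        = (Q * !![φ l, 0; 0, φ l] * Q⁻¹ : Matrix (Fin 2) (Fin 2) K))
    (hΦjord : ∀ (l : K) (Q : GL (Fin 2) K), l ∈ s →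
      Φ (Q * !![l, 1; 0, l] * Q⁻¹ : Matrix (Fin 2) (Fin 2) K)
        = (Q * !![φ l, φ' l; 0, φ l] * Q⁻¹ : Matrix (Fin 2) (Fin 2) K))
    {l : K} (hl : l ∈ s) (Q : GL (Fin 2) K) (b : K) :
    Φ (Q * !![l, b; 0, l] * Q⁻¹ : Matrix (Fin 2) (Fin 2) K)
      = (Q * !![φ l, b * φ' l; 0, φ l] * Q⁻¹ : Matrix (Fin 2) (Fin 2) K) := by
  rcases eq_or_ne b 0 with rfl | hb
  · simpa using hΦdiag l Q hl
  obtain ⟨S, hS⟩ := exists_conj_scale_fin_two_upper_scalar b hb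
  rw [← hS (φ l) (φ' l), ← mul_one b, ← hS l 1, Units.conj_conj, Units.conj_conj,
    hΦjord l _ hl]

end Field

end Matrix

theorem stmt16_general (p : Polynomial ℂ) (d : ℕ)
    (R : ℝ) (φ : ℂ → ℂ)
    (hφdiff : DifferentiableOn ℂ φ {z : ℂ | R < ‖z‖})
    (hφeq : ∀ z : ℂ, R < ‖z‖ → φ (p.eval z) = φ z ^ d)
    (Φ : Matrix (Fin 2) (Fin 2) ℂ → Matrix (Fin 2) (Fin 2) ℂ)
    (hΦdiag : ∀ (l μ : ℂ) (Q : GL (Fin 2) ℂ), R < ‖l‖ → R < ‖μ‖ →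
      Φ ((Q : Matrix (Fin 2) (Fin 2) ℂ) * !![l, 0; 0, μ]
          * ((Q⁻¹ : GL (Fin 2) ℂ) : Matrix (Fin 2) (Fin 2) ℂ))
        = (Q : Matrix (Fin 2) (Fin 2) ℂ) * !![φ l, 0; 0, φ μ]
          * ((Q⁻¹ : GL (Fin 2) ℂ) : Matrix (Fin 2) (Fin 2) ℂ))
    (hΦjord : ∀ (l : ℂ) (Q : GL (Fin 2) ℂ), R < ‖l‖ →
      Φ ((Q : Matrix (Fin 2) (Fin 2) ℂ) * !![l, 1; 0, l]
          * ((Q⁻¹ : GL (Fin 2) ℂ) : Matrix (Fin 2) (Fin 2) ℂ))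
        = (Q : Matrix (Fin 2) (Fin 2) ℂ) * !![φ l, deriv φ l; 0, φ l]
          * ((Q⁻¹ : GL (Fin 2) ℂ) : Matrix (Fin 2) (Fin 2) ℂ))
    (M : Matrix (Fin 2) (Fin 2) ℂ)
    (hM : ∀ μ ∈ spectrum ℂ M, R < ‖μ‖ ∧ R < ‖p.eval μ‖) :
    Φ (Polynomial.aeval M p) = Φ M ^ d := by
  obtain ⟨Q, ⟨a, c, rfl⟩ | ⟨a, rfl⟩⟩ := exists_conj_fin_two_diag_or_jordan M
  · rw [Units.spectrum_conj] at hM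
    obtain ⟨ha, hpa⟩ := hM a (mem_spectrum_fin_two_upper_left a 0 c)
    obtain ⟨hc, hpc⟩ := hM c (mem_spectrum_fin_two_upper_right a 0 c)
    rw [Units.aeval_conj, aeval_fin_two_diag, hΦdiag _ _ Q hpa hpc, hΦdiag a c Q ha hc,
      Units.conj_pow, fin_two_diag_pow, hφeq a ha, hφeq c hc]
  · rw [Units.spectrum_conj] at hM
    obtain ⟨ha, hpa⟩ := hM a (mem_spectrum_fin_two_upper_left a 1 a)
    have hΩ : IsOpen {z : ℂ | R < ‖z‖} := isOpen_lt continuous_const continuous_norm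
    have hφ : ∀ z : ℂ, R < ‖z‖ → HasDerivAt φ (deriv φ z) z := fun z hz =>
      (hφdiff.differentiableAt (hΩ.mem_nhds hz)).hasDerivAt
    have hchain : deriv φ (p.eval a) * p.derivative.eval a = d * φ a ^ (d - 1) * deriv φ a :=
      (hφ _ hpa).mul_eq_of_comp_eventuallyEq_pow (p.hasDerivAt a) (hφ a ha)
      (eventually_of_mem (hΩ.mem_nhds ha) hφeq)
    rw [Units.aeval_conj, aeval_fin_two_upper_scalar,
      apply_conj_fin_two_upper_scalar (fun l Q hl => hΦdiag l l Q hl hl) hΦjord hpa,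
      hΦjord a Q ha, Units.conj_pow, fin_two_upper_scalar_pow, hφeq a ha, one_mul, mul_comm,
      hchain]

/-- The Böttcher-type function Φ of the matrix polynomial semiconjugates P to the
d-th power map. -/
theorem stmt16 (p : Polynomial ℂ) (d : ℕ) (hd : 2 ≤ d) (hdeg : p.natDegree = d)
    (R : ℝ) (hR : 1 < R) (φ : ℂ → ℂ)
    (hφdiff : DifferentiableOn ℂ φ {z : ℂ | R < ‖z‖})
    (hφeq : ∀ z : ℂ, R < ‖z‖ → φ (p.eval z) = φ z ^ d)
    (Φ : Matrix (Fin 2) (Fin 2) ℂ → Matrix (Fin 2) (Fin 2) ℂ)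
    (hΦdiag : ∀ (l μ : ℂ) (Q : GL (Fin 2) ℂ), R < ‖l‖ → R < ‖μ‖ →
      Φ ((Q : Matrix (Fin 2) (Fin 2) ℂ) * !![l, 0; 0, μ]
          * ((Q⁻¹ : GL (Fin 2) ℂ) : Matrix (Fin 2) (Fin 2) ℂ))
        = (Q : Matrix (Fin 2) (Fin 2) ℂ) * !![φ l, 0; 0, φ μ]
          * ((Q⁻¹ : GL (Fin 2) ℂ) : Matrix (Fin 2) (Fin 2) ℂ))
    (hΦjord : ∀ (l : ℂ) (Q : GL (Fin 2) ℂ), R < ‖l‖ →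
      Φ ((Q : Matrix (Fin 2) (Fin 2) ℂ) * !![l, 1; 0, l]
          * ((Q⁻¹ : GL (Fin 2) ℂ) : Matrix (Fin 2) (Fin 2) ℂ))
        = (Q : Matrix (Fin 2) (Fin 2) ℂ) * !![φ l, deriv φ l; 0, φ l]
          * ((Q⁻¹ : GL (Fin 2) ℂ) : Matrix (Fin 2) (Fin 2) ℂ))
    (M : Matrix (Fin 2) (Fin 2) ℂ)
    (hM : ∀ μ ∈ spectrum ℂ M, R < ‖μ‖ ∧ R < ‖p.eval μ‖) :
    Φ (Polynomial.aeval M p) = Φ M ^ d :=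
  stmt16_general p d R φ hφdiff hφeq Φ hΦdiag hΦjord M hM
end

section
/- Let p be a complex polynomial of degree d ≥ 2 with Böttcher coordinate φ_p on {|z| > R} satisfying φ_p(p^n(z)) = (φ_p(z))^{d^n} for all n ≥ 1 and all |z| > R, with φ_p(z)/z → b ≠ 0 and φ_p'(z) → b as |z| → ∞. Then for every z with |z| > R whose forward orbit stays in {|w| > R} and tends to infinity, lim_{n→∞} d^{-n} log|(p^n)'(z)| = lim_{n→∞} d^{-n} log|p^n(z)|, i.e., the two limits exist and are equal. -/
/-!
Put `r = ‖φ z‖`. Since `‖φ (pⁿ z)‖ = r ^ dⁿ` and `φ w ~ b w` at infinity, `r > 1` and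
`log ‖pⁿ z‖ = dⁿ log r + O(1)`. Differentiating the functional equation gives
`φ'(pⁿ z) (pⁿ)'(z) = dⁿ φ(z)^(dⁿ-1) φ'(z)`, hence `log ‖(pⁿ)'(z)‖ = dⁿ log r + O(n)` as soon as
`φ'(z) ≠ 0`; both limits are then `log r`.

If `φ'(z) = 0`, the same identity and `φ'(pⁿ z) → b ≠ 0` put a critical point `c` of `p` on the
orbit of `z`. By Gauss–Lucas every point has a preimage of modulus at least `‖c‖ > R`, so `z` has
a backward orbit in the domain, along which `φ'` vanishes. The values `‖φ‖ = r ^ (1 / d ^ m)` on it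
are distinct and bounded, so it is an infinite set of zeros of `φ'` inside a compact part of the
connected domain `{R < ‖w‖}`, contradicting `φ' → b ≠ 0` by the identity theorem.
-/

open Matrix Polynomial Filter

noncomputable section

open Asymptotics Topology Bornology

theorem deriv_iterate_eq_prod {𝕜 : Type*} [NontriviallyNormedField 𝕜] {f : 𝕜 → 𝕜}
    (hf : Differentiable 𝕜 f) (n : ℕ) (x : 𝕜) :
    deriv f^[n] x = ∏ k ∈ Finset.range n, deriv f (f^[k] x) := by
  induction n generalizing x with
  | zero => simp
  | succ n ih =>
    rw [Function.iterate_succ, deriv_comp x ((hf.iterate n).differentiableAt) hf.differentiableAt,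
      ih, Finset.prod_range_succ']
    simp only [Function.iterate_succ_apply, Function.iterate_zero_apply]

theorem deriv_comp_mul_deriv_of_eventuallyEq_pow {𝕜 : Type*} [NontriviallyNormedField 𝕜]
    {φ g : 𝕜 → 𝕜} {y : 𝕜} {k : ℕ} (hφg : DifferentiableAt 𝕜 φ (g y))
    (hφ : DifferentiableAt 𝕜 φ y) (hg : DifferentiableAt 𝕜 g y)
    (h : φ ∘ g =ᶠ[𝓝 y] fun u => φ u ^ k) :
    deriv φ (g y) * deriv g y = k * φ y ^ (k - 1) * deriv φ y := by
  rw [← deriv_comp y hφg hg, h.deriv_eq]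
  exact (hφ.hasDerivAt.fun_pow k).deriv

theorem Polynomial.exists_eval_eq_norm_le {P : ℂ[X]} (hP : 0 < P.degree) {c : ℂ}
    (hc : P.derivative.eval c = 0) (v : ℂ) : ∃ x, P.eval x = v ∧ ‖c‖ ≤ ‖x‖ := by
  set Q := P - C v
  have hQ : 0 < Q.degree := by rwa [degree_sub_C hP]
  have hQc : Q.derivative.eval c = 0 := by simpa [Q] using hc
  by_contra! h
  have hroots : ∀ x ∈ Q.roots.toFinset, x ∈ Metric.ball (0 : ℂ) ‖c‖ := fun x hx => by
    have hx : Q.IsRoot x := (mem_roots'.1 (Multiset.mem_toFinset.1 hx)).2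
    simpa [Q, sub_eq_zero] using h x (by simpa [Q, sub_eq_zero] using hx)
  have := (convex_ball (0 : ℂ) ‖c‖).centerMass_mem (z := id)
    (fun w _ => derivRootWeight_nonneg Q c w) (sum_derivRootWeight_pos hQ c) hroots
  rw [← eq_centerMass_of_eval_derivative_eq_zero hQ hQc] at this
  simp at this

theorem Polynomial.exists_backward_orbit_le_norm {P : ℂ[X]} (hP : 0 < P.degree) {c : ℂ}
    (hc : P.derivative.eval c = 0) (z : ℂ) :
    ∃ w : ℕ → ℂ, ∀ m, (fun x => P.eval x)^[m + 1] (w m) = z ∧ ‖c‖ ≤ ‖w m‖ := by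
  choose g hg hgc using P.exists_eval_eq_norm_le hP hc
  have hg' : Function.LeftInverse (fun x => P.eval x) g := hg
  refine ⟨fun m => g^[m + 1] z, fun m => ⟨hg'.iterate (m + 1) z, ?_⟩⟩
  simpa only [Function.iterate_succ_apply'] using hgc _

theorem Complex.isPreconnected_setOf_lt_norm {R : ℝ} (hR : 0 < R) :
    IsPreconnected {w : ℂ | R < ‖w‖} := by
  have himage : Complex.exp '' {x | Real.log R < x.re} = {w : ℂ | R < ‖w‖} := by
    ext w
    constructor
    · rintro ⟨x, hx, rfl⟩
      simpa [Complex.norm_exp, ← Real.log_lt_iff_lt_exp hR] using hx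
    · intro hw
      have hw0 : w ≠ 0 := norm_pos_iff.1 (hR.trans hw)
      exact ⟨Complex.log w, by simpa [Complex.log_re] using Real.log_lt_log hR hw,
        Complex.exp_log hw0⟩
  rw [← himage]
  exact ((convex_halfSpace_re_gt _).isPreconnected).image _ Complex.continuous_exp.continuousOn

theorem AnalyticOnNhd.finite_setOf_eq_zero_of_isCompact {𝕜 E : Type*} [NontriviallyNormedField 𝕜]
    [NormedAddCommGroup E] [NormedSpace 𝕜 E] {f : 𝕜 → E} {U K : Set 𝕜}
    (hf : AnalyticOnNhd 𝕜 f U) (hU : IsPreconnected U) (hne : ∃ x ∈ U, f x ≠ 0)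
    (hK : IsCompact K) (hKU : K ⊆ U) : {x ∈ K | f x = 0}.Finite := by
  obtain ⟨x, hxU, hx⟩ := hne
  rcases hf.eqOn_zero_or_eventually_ne_zero_of_preconnected hU with h | h
  · exact absurd (h hxU) hx
  · have := hK.finite_sdiff_of_mem_codiscreteWithin (codiscreteWithin_mono hKU h)
    convert this using 1
    ext
    simp

theorem tendsto_cobounded_of_tendsto_div {𝕜 : Type*} [NormedField 𝕜] {φ : 𝕜 → 𝕜} {b : 𝕜}
    (hb : b ≠ 0) (h : Tendsto (fun w => φ w / w) (cobounded 𝕜) (𝓝 b)) :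
    Tendsto φ (cobounded 𝕜) (cobounded 𝕜) := by
  rw [← tendsto_norm_atTop_iff_cobounded]
  refine ((h.norm.pos_mul_atTop (norm_pos_iff.2 hb) tendsto_norm_cobounded_atTop)).congr' ?_
  filter_upwards [(tendsto_norm_cobounded_atTop (E := 𝕜)).eventually_gt_atTop 0] with w hw
  rw [norm_div, div_mul_cancel₀ _ hw.ne']

theorem one_lt_of_tendsto_pow_atTop {r : ℝ} (hr : 0 ≤ r) {k : ℕ → ℕ}
    (h : Tendsto (fun n => r ^ k n) atTop atTop) : 1 < r := by
  by_contra! hr1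
  obtain ⟨n, hn⟩ := (h.eventually_gt_atTop 1).exists
  exact (pow_le_one₀ hr hr1).not_gt hn

theorem tendsto_div_pow_of_sub_isBigO {u : ℕ → ℝ} {d L : ℝ} (hd : 1 < d)
    (h : (fun n => u n - d ^ n * L) =O[atTop] (fun n => (n : ℝ))) :
    Tendsto (fun n => u n / d ^ n) atTop (𝓝 L) := by
  have hsmall :=
    (h.trans_isLittleO (isLittleO_coe_const_pow_of_one_lt (R := ℝ) hd)).tendsto_div_nhds_zero
  refine (by simpa using hsmall.const_add L : Tendsto _ _ _).congr fun n => ?_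
  have : d ^ n ≠ 0 := pow_ne_zero n (by linarith)
  field_simp
  ring

theorem Filter.Tendsto.isBigO_natCast {e : ℕ → ℝ} {c : ℝ} (h : Tendsto e atTop (𝓝 c)) :
    e =O[atTop] (fun n => (n : ℝ)) :=
  (h.isBigO_one ℝ).trans <| ((isLittleO_one_left_iff ℝ).2 <| by
    simpa using tendsto_natCast_atTop_atTop).isBigO

theorem tendsto_log_norm_div_pow_of_tendsto_pow_div {d : ℕ} (hd : 1 < d) {a b : ℂ} (hb : b ≠ 0)
    {x : ℕ → ℂ} (h : Tendsto (fun n => a ^ d ^ n / x n) atTop (𝓝 b)) :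
    Tendsto (fun n => Real.log ‖x n‖ / (d : ℝ) ^ n) atTop (𝓝 (Real.log ‖a‖)) := by
  refine tendsto_div_pow_of_sub_isBigO (by exact_mod_cast hd) ?_
  have hlog := ((h.norm.log (norm_ne_zero_iff.2 hb)).neg).isBigO_natCast
  refine hlog.congr' ?_ .rfl
  filter_upwards [h.eventually_ne hb] with n hn
  obtain ⟨ha, hx⟩ : a ^ d ^ n ≠ 0 ∧ x n ≠ 0 := by simpa [not_or] using hn
  rw [norm_div, Real.log_div (by simpa using ha) (by simpa using hx), norm_pow, Real.log_pow]
  push_cast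
  ring

theorem tendsto_log_norm_div_pow_of_mul_eq {d : ℕ} (hd : 1 < d) {a s b : ℂ} (ha : a ≠ 0)
    (hs : s ≠ 0) (hb : b ≠ 0) {A D : ℕ → ℂ} (hA : Tendsto A atTop (𝓝 b))
    (h : ∀ᶠ n in atTop, A n * D n = d ^ n * a ^ (d ^ n - 1) * s) :
    Tendsto (fun n => Real.log ‖D n‖ / (d : ℝ) ^ n) atTop (𝓝 (Real.log ‖a‖)) := by
  refine tendsto_div_pow_of_sub_isBigO (by exact_mod_cast hd) ?_
  have hlin : (fun n : ℕ => Real.log d * n) =O[atTop] (fun n => (n : ℝ)) :=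
    (isBigO_refl _ _).const_mul_left _
  have hlog := ((hA.norm.log (norm_ne_zero_iff.2 hb)).const_sub
    (Real.log ‖s‖ - Real.log ‖a‖)).isBigO_natCast
  refine (hlin.add hlog).congr' ?_ .rfl
  filter_upwards [h, hA.eventually_ne hb] with n hn hAn
  have hd0 : (d : ℂ) ^ n ≠ 0 := pow_ne_zero _ (by exact_mod_cast (by omega : d ≠ 0))
  have hprod : A n * D n * a = d ^ n * a ^ d ^ n * s := by
    rw [hn, mul_right_comm, mul_assoc _ (a ^ _), pow_sub_one_mul (by positivity)]
  have hDn : D n ≠ 0 := by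
    rintro hD
    rw [hD, mul_zero, zero_mul, eq_comm] at hprod
    exact mul_ne_zero (mul_ne_zero hd0 (pow_ne_zero _ ha)) hs hprod
  have hlogs := congrArg (fun w : ℂ => Real.log ‖w‖) hprod
  simp only [norm_mul, norm_pow, Complex.norm_natCast] at hlogs
  rw [Real.log_mul (by positivity) (by simpa using ha),
    Real.log_mul (by simpa using hAn) (by simpa using hDn),
    Real.log_mul (by positivity) (by simpa using hs),
    Real.log_mul (by positivity) (pow_ne_zero _ (norm_ne_zero_iff.2 ha)),
    Real.log_pow, Real.log_pow] at hlogs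
  push_cast at hlogs
  linarith

theorem injective_of_pow_eq {α : Type*} {w : ℕ → α} {ψ : α → ℝ} (hψ : ∀ x, 0 ≤ ψ x)
    {k : ℕ → ℕ} (hk : Function.Injective k) {r : ℝ} (hr : 1 < r)
    (h : ∀ m, ψ (w m) ^ k m = r) : Function.Injective w := by
  intro m m' hmm'
  have h1 : 1 < ψ (w m) := lt_of_pow_lt_pow_left₀ (k m) (hψ _) (by rwa [one_pow, h m])
  refine hk (pow_right_injective₀ (by linarith) h1.ne' ?_)
  change ψ (w m) ^ k m = ψ (w m) ^ k m'
  rw [h m, hmm', h m']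

section Boettcher

variable {f φ : ℂ → ℂ} {d : ℕ} {R : ℝ}

theorem deriv_mul_deriv_iterate_eq (hf : Differentiable ℂ f)
    (hφ : DifferentiableOn ℂ φ {w : ℂ | R < ‖w‖})
    (hφeq : ∀ n : ℕ, 1 ≤ n → ∀ z : ℂ, R < ‖z‖ → φ (f^[n] z) = φ z ^ (d ^ n))
    {n : ℕ} (hn : 1 ≤ n) {y : ℂ} (hy : R < ‖y‖) (hny : R < ‖f^[n] y‖) :
    deriv φ (f^[n] y) * deriv f^[n] y = (d : ℂ) ^ n * φ y ^ (d ^ n - 1) * deriv φ y := by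
  rw [← Nat.cast_pow]
  have hU : IsOpen {w : ℂ | R < ‖w‖} := isOpen_lt continuous_const continuous_norm
  refine deriv_comp_mul_deriv_of_eventuallyEq_pow (hφ.differentiableAt (hU.mem_nhds hny))
    (hφ.differentiableAt (hU.mem_nhds hy)) (hf.iterate n).differentiableAt ?_
  filter_upwards [hU.mem_nhds hy] with u hu using hφeq n hn u hu

theorem exists_deriv_eq_zero_iterate_of_deriv_eq_zero (hf : Differentiable ℂ f)
    (hφ : DifferentiableOn ℂ φ {w : ℂ | R < ‖w‖})
    (hφeq : ∀ n : ℕ, 1 ≤ n → ∀ z : ℂ, R < ‖z‖ → φ (f^[n] z) = φ z ^ (d ^ n))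
    {b : ℂ} (hb : b ≠ 0) (hderφ : Tendsto (deriv φ) (cobounded ℂ) (𝓝 b))
    {z : ℂ} (horb : ∀ n, R < ‖f^[n] z‖) (hcob : Tendsto (f^[·] z) atTop (cobounded ℂ))
    (hz : deriv φ z = 0) : ∃ k, deriv f (f^[k] z) = 0 := by
  obtain ⟨N, hN, hN1⟩ :=
    (((hderφ.comp hcob).eventually_ne hb).and (eventually_ge_atTop 1)).exists
  have hchain := deriv_mul_deriv_iterate_eq hf hφ hφeq hN1 (y := z) (horb 0) (horb N)
  rw [hz, mul_zero] at hchain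
  have hN' : deriv f^[N] z = 0 := (mul_eq_zero.1 hchain).resolve_left hN
  rw [deriv_iterate_eq_prod hf, Finset.prod_eq_zero_iff] at hN'
  obtain ⟨k, -, hk⟩ := hN'
  exact ⟨k, hk⟩

theorem finite_setOf_deriv_eq_zero (hR : 0 < R) (hφ : DifferentiableOn ℂ φ {w : ℂ | R < ‖w‖})
    {b : ℂ} (hb : b ≠ 0) (hratio : Tendsto (fun z : ℂ => φ z / z) (cobounded ℂ) (𝓝 b))
    (hderφ : Tendsto (deriv φ) (cobounded ℂ) (𝓝 b)) {ρ : ℝ} (hρ : R < ρ) (r : ℝ) :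
    {x : ℂ | ρ ≤ ‖x‖ ∧ ‖φ x‖ ≤ r ∧ deriv φ x = 0}.Finite := by
  set S := {x : ℂ | ρ ≤ ‖x‖ ∧ ‖φ x‖ ≤ r}
  have hS : IsBounded S := by
    have := (tendsto_cobounded_of_tendsto_div hb hratio).eventually
      ((tendsto_norm_cobounded_atTop (E := ℂ)).eventually_gt_atTop r)
    exact (isBounded_def.2 (this.mono fun x hx => not_le.2 hx) :
      IsBounded {x | ‖φ x‖ ≤ r}).subset fun x hx => hx.2
  have hSU : closure S ⊆ {x : ℂ | R < ‖x‖} :=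
    (closure_minimal (fun x hx => hx.1) (isClosed_le continuous_const continuous_norm)).trans
      fun x hx => hρ.trans_le hx
  have hU : IsOpen {w : ℂ | R < ‖w‖} := isOpen_lt continuous_const continuous_norm
  obtain ⟨x, hxU, hx⟩ := ((hderφ.eventually_ne hb).and
    ((tendsto_norm_cobounded_atTop (E := ℂ)).eventually_gt_atTop R)).exists
  refine ((hφ.analyticOnNhd hU).deriv.finite_setOf_eq_zero_of_isCompact
    (Complex.isPreconnected_setOf_lt_norm hR) ⟨x, hx, hxU⟩ hS.isCompact_closure hSU).subset ?_
  exact fun x hx => ⟨subset_closure ⟨hx.1, hx.2.1⟩, hx.2.2⟩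

theorem deriv_ne_zero_of_tendsto_iterate {p : ℂ[X]} (hp : 0 < p.degree) (hd : 2 ≤ d)
    (hR : 0 < R) (hφ : DifferentiableOn ℂ φ {w : ℂ | R < ‖w‖})
    (hφeq : ∀ n : ℕ, 1 ≤ n → ∀ z : ℂ, R < ‖z‖ →
      φ ((fun w => p.eval w)^[n] z) = φ z ^ (d ^ n))
    {b : ℂ} (hb : b ≠ 0) (hratio : Tendsto (fun z : ℂ => φ z / z) (cobounded ℂ) (𝓝 b))
    (hderφ : Tendsto (deriv φ) (cobounded ℂ) (𝓝 b))
    {z : ℂ} (horb : ∀ n, R < ‖(fun w => p.eval w)^[n] z‖)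
    (hcob : Tendsto ((fun w => p.eval w)^[·] z) atTop (cobounded ℂ)) (hr : 1 < ‖φ z‖) :
    deriv φ z ≠ 0 := by
  intro hz
  have hf : Differentiable ℂ (fun w => p.eval w) := p.differentiable
  obtain ⟨k, hk⟩ :=
    exists_deriv_eq_zero_iterate_of_deriv_eq_zero hf hφ hφeq hb hderφ horb hcob hz
  obtain ⟨w, hw⟩ := p.exists_backward_orbit_le_norm hp (by simpa [Polynomial.deriv] using hk) z
  have hwR m : R < ‖w m‖ := (horb k).trans_le (hw m).2
  have hφw m : ‖φ (w m)‖ ^ d ^ (m + 1) = ‖φ z‖ := by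
    rw [← norm_pow, ← hφeq _ le_add_self _ (hwR m), (hw m).1]
  have hφw1 m : 1 < ‖φ (w m)‖ :=
    lt_of_pow_lt_pow_left₀ _ (norm_nonneg _) (by rwa [one_pow, hφw])
  have hφ'w m : deriv φ (w m) = 0 := by
    have hchain := deriv_mul_deriv_iterate_eq hf hφ hφeq le_add_self (hwR m)
      ((hw m).1 ▸ (horb 0 : R < ‖z‖))
    rw [(hw m).1, hz, zero_mul, eq_comm] at hchain
    have hφw0 : φ (w m) ≠ 0 := norm_pos_iff.1 (one_pos.trans (hφw1 m))
    simpa [hφw0, show d ≠ 0 by omega] using hchain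
  have hinj : Function.Injective w := injective_of_pow_eq (fun _ => norm_nonneg _)
    ((Nat.pow_right_injective hd).comp (add_left_injective 1)) hr hφw
  refine Set.infinite_range_of_injective hinj
    ((finite_setOf_deriv_eq_zero hR hφ hb hratio hderφ (horb k) ‖φ z‖).subset ?_)
  rintro _ ⟨m, rfl⟩
  exact ⟨(hw m).2, (le_self_pow₀ (hφw1 m).le (by positivity)).trans_eq (hφw m), hφ'w m⟩

end Boettcher

/-- For points escaping to infinity, d⁻ⁿ log|(pⁿ)′(z)| and d⁻ⁿ log|pⁿ(z)| have the
same limit. -/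
theorem stmt19 (p : Polynomial ℂ) (d : ℕ) (hd : 2 ≤ d) (hdeg : p.natDegree = d)
    (R : ℝ) (hR : 1 < R) (φ : ℂ → ℂ) (b : ℂ) (hb : b ≠ 0)
    (hφdiff : DifferentiableOn ℂ φ {z : ℂ | R < ‖z‖})
    (hφeq : ∀ n : ℕ, 1 ≤ n → ∀ z : ℂ, R < ‖z‖ →
      φ ((fun w => p.eval w)^[n] z) = φ z ^ (d ^ n))
    (hratio : Tendsto (fun z : ℂ => φ z / z) (Bornology.cobounded ℂ) (nhds b))
    (hderφ : Tendsto (deriv φ) (Bornology.cobounded ℂ) (nhds b))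
    (z : ℂ) (hz : R < ‖z‖)
    (horb : ∀ n : ℕ, R < ‖((fun w => p.eval w)^[n] z)‖)
    (hinf : Tendsto (fun n : ℕ => ‖((fun w => p.eval w)^[n] z)‖) atTop atTop) :
    ∃ L : ℝ,
      Tendsto (fun n : ℕ =>
          Real.log ‖(deriv ((fun w => p.eval w)^[n]) z)‖ / (d : ℝ) ^ n)
        atTop (nhds L) ∧
      Tendsto (fun n : ℕ =>
          Real.log ‖((fun w => p.eval w)^[n] z)‖ / (d : ℝ) ^ n)
        atTop (nhds L) := by
  have hd1 : 1 < d := by omega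
  have hp : 0 < p.degree := natDegree_pos_iff_degree_pos.1 (by omega)
  have hcob : Tendsto ((fun w => p.eval w)^[·] z) atTop (cobounded ℂ) :=
    tendsto_norm_atTop_iff_cobounded.1 hinf
  have hφorb : ∀ᶠ n in atTop, φ ((fun w => p.eval w)^[n] z) = φ z ^ d ^ n :=
    eventually_atTop.2 ⟨1, fun n hn => hφeq n hn z hz⟩
  have hr : 1 < ‖φ z‖ := by
    refine one_lt_of_tendsto_pow_atTop (norm_nonneg _) (k := (d ^ ·)) ?_
    refine (tendsto_norm_atTop_iff_cobounded.2
      ((tendsto_cobounded_of_tendsto_div hb hratio).comp hcob)).congr' ?_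
    filter_upwards [hφorb] with n hn
    simp [hn]
  have hφ' := deriv_ne_zero_of_tendsto_iterate hp hd (by linarith) hφdiff hφeq hb hratio hderφ
    horb hcob hr
  refine ⟨Real.log ‖φ z‖, ?_, ?_⟩
  · refine tendsto_log_norm_div_pow_of_mul_eq hd1 (norm_pos_iff.1 (one_pos.trans hr)) hφ' hb
      (hderφ.comp hcob) ?_
    filter_upwards [eventually_ge_atTop 1] with n hn
    exact deriv_mul_deriv_iterate_eq p.differentiable hφdiff hφeq hn hz (horb n)
  · refine tendsto_log_norm_div_pow_of_tendsto_pow_div hd1 hb ((hratio.comp hcob).congr' ?_)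
    filter_upwards [hφorb] with n hn
    simp [hn]
end
end
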